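/- arXiv:0708.1711 — 7 statements merged into one kernel-verified Lean document; each statement's English description precedes it below -/
import Mathlib

section
/- Let F be an infinite field, let K be an algebraic closure of F, and let L be a finite-dimensional Lie algebra over F. Then there exist x, y ∈ L generating L as a Lie algebra over F if and only if there exist u, v ∈ K ⊗_F L generating K ⊗_F L as a Lie algebra over K. -/
open scoped TensorProduct

/-!
Fix a basis of `L` over `F`, with structure constants in `F`. For any field extension `E` of `F`, the
coordinates of a bracket word in `u, v ∈ E ⊗ L` are polynomials over `F` in the coordinates of
`u` and `v`, so for `d = dim L` words the determinant of their coordinates is a polynomial `P_w`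
over `F`. Over an infinite field `E`, `E ⊗ L` is generated by two elements iff some bracket words
span, iff some `P_w` does not vanish at some point of `E`, iff some `P_w` is a nonzero
polynomial. The last condition does not depend on `E`, and `E = F` and `E = K` are both infinite.
-/

open Module MvPolynomial

namespace FreeMagma

variable {ι L : Type*} [LieRing L]

def evalLie (g : ι → L) : FreeMagma ι → L
  | of j => g j
  | mul a b => ⁅evalLie g a, evalLie g b⁆

@[simp] theorem evalLie_of (g : ι → L) (j : ι) : evalLie g (of j) = g j := rfl

@[simp] theorem evalLie_mul (g : ι → L) (a b : FreeMagma ι) :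
    evalLie g (a * b) = ⁅evalLie g a, evalLie g b⁆ := rfl

end FreeMagma

open FreeMagma

theorem Submodule.lie_mem_span_of_lie_mem {R L : Type*} [CommRing R] [LieRing L] [LieAlgebra R L]
    {s : Set L} (hs : ∀ x ∈ s, ∀ y ∈ s, ⁅x, y⁆ ∈ span R s) {x y : L}
    (hx : x ∈ span R s) (hy : y ∈ span R s) : ⁅x, y⁆ ∈ span R s := by
  induction hx, hy using span_induction₂ with
  | mem_mem x y hx hy => exact hs x hx y hy
  | _ => simp [add_lie, lie_add, add_mem, smul_mem, *]

theorem LieSubalgebra.coe_lieSpan_range_eq_span_evalLie {R L ι : Type*} [CommRing R] [LieRing L]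
    [LieAlgebra R L] (g : ι → L) :
    (lieSpan R L (Set.range g) : Submodule R L) = Submodule.span R (Set.range (evalLie g)) := by
  let S : LieSubalgebra R L :=
    { Submodule.span R (Set.range (evalLie g)) with
      lie_mem' := Submodule.lie_mem_span_of_lie_mem <| by
        rintro _ ⟨a, rfl⟩ _ ⟨b, rfl⟩
        exact Submodule.subset_span ⟨a * b, rfl⟩ }
  have evalLie_mem : ∀ w, evalLie g w ∈ lieSpan R L (Set.range g) := by
    intro w
    induction w with
    | ih1 j => exact subset_lieSpan ⟨j, rfl⟩
    | ih2 a b ha hb => exact lie_mem _ ha hb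
  refine le_antisymm (?_ : lieSpan R L (Set.range g) ≤ S) ?_
  · rw [lieSpan_le]
    rintro _ ⟨j, rfl⟩
    exact Submodule.subset_span ⟨of j, rfl⟩
  · rw [Submodule.span_le]
    rintro _ ⟨w, rfl⟩
    exact evalLie_mem w

theorem LieSubalgebra.lieSpan_range_eq_top_iff {R L ι : Type*} [CommRing R] [LieRing L]
    [LieAlgebra R L] (g : ι → L) :
    lieSpan R L (Set.range g) = ⊤ ↔ Submodule.span R (Set.range (evalLie g)) = ⊤ := by
  rw [← coe_lieSpan_range_eq_span_evalLie, toSubmodule_eq_top]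

theorem Module.Basis.span_range_eq_top_iff_exists_det_ne_zero {E M κ α : Type*} [Field E]
    [AddCommGroup M] [Module E M] [Fintype κ] [DecidableEq κ] (c : Basis κ E M) (v : α → M) :
    Submodule.span E (Set.range v) = ⊤ ↔ ∃ w : κ → α, c.det (v ∘ w) ≠ 0 := by
  constructor
  · intro hv
    obtain ⟨κ', a, -, hspan, hli⟩ := exists_linearIndependent' E v
    let b : Basis κ' E M := .mk hli (by rw [hspan, hv])
    let e : κ ≃ κ' := c.indexEquiv b
    refine ⟨a ∘ e, ?_⟩
    rw [← isUnit_iff_ne_zero, ← c.is_basis_iff_det]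
    have hb : v ∘ (a ∘ e) = b ∘ e := by ext; simp [b]
    rw [hb]
    exact ⟨b.linearIndependent.comp e e.injective, by rw [e.surjective.range_comp, b.span_eq]⟩
  · rintro ⟨w, hw⟩
    have hspan := ((c.is_basis_iff_det).mpr (isUnit_iff_ne_zero.mpr hw)).2
    exact top_unique (hspan ▸ Submodule.span_mono (Set.range_comp_subset_range w v))

theorem Module.Basis.repr_lie {R L κ : Type*} [CommRing R] [LieRing L] [LieAlgebra R L]
    [Fintype κ] (c : Basis κ R L) (x y : L) (i : κ) :
    c.repr ⁅x, y⁆ i = ∑ j, ∑ k, c.repr x j * c.repr y k * c.repr ⁅c j, c k⁆ i := by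
  conv_lhs => rw [← c.sum_repr x, ← c.sum_repr y]
  simp only [sum_lie_sum, smul_lie, lie_smul, smul_smul, map_sum, map_smul,
    Finsupp.coe_finsetSum, Finset.sum_apply, Finsupp.coe_smul, Pi.smul_apply, smul_eq_mul]
  exact Finset.sum_congr rfl fun j _ => Finset.sum_congr rfl fun k _ => by ring

theorem Module.Basis.baseChange_repr_lie {R A L κ : Type*} [CommRing R] [CommRing A]
    [Algebra R A] [LieRing L] [LieAlgebra R L] (b : Basis κ R L) (j k i : κ) :
    (b.baseChange A).repr ⁅b.baseChange A j, b.baseChange A k⁆ i =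
      algebraMap R A (b.repr ⁅b j, b k⁆ i) := by
  rw [Basis.baseChange_apply, Basis.baseChange_apply, LieAlgebra.ExtendScalars.bracket_tmul,
    one_mul, Basis.baseChange_repr_tmul, Algebra.smul_def, mul_one]

namespace FreeMagma

variable {F ι κ : Type*} [CommRing F] [Fintype κ]

/-- `st j k i` plays the role of the `i`-th coordinate of `⁅c j, c k⁆` for a basis `c`, and
`X (j, i)` that of the `i`-th coordinate of the `j`-th generator. -/
noncomputable def coordPoly (st : κ → κ → κ → F) : FreeMagma ι → κ → MvPolynomial (ι × κ) F
  | of j, i => X (j, i)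
  | mul a b, i => ∑ j, ∑ k, C (st j k i) * coordPoly st a j * coordPoly st b k

@[simp] theorem coordPoly_of (st : κ → κ → κ → F) (j : ι) (i : κ) :
    coordPoly st (of j) i = X (j, i) := rfl

@[simp] theorem coordPoly_mul (st : κ → κ → κ → F) (a b : FreeMagma ι) (i : κ) :
    coordPoly st (a * b) i = ∑ j, ∑ k, C (st j k i) * coordPoly st a j * coordPoly st b k := rfl

noncomputable def detPoly [DecidableEq κ] (st : κ → κ → κ → F) (w : κ → FreeMagma ι) :
    MvPolynomial (ι × κ) F :=
  (Matrix.of fun i i' => coordPoly st (w i') i).det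

end FreeMagma

section StructureConstants

variable {F E L ι κ : Type*} [CommRing F] [CommRing E] [Algebra F E] [LieRing L] [LieAlgebra E L]
  [Fintype κ] (c : Basis κ E L) (st : κ → κ → κ → F)

theorem Module.Basis.repr_evalLie
    (hc : ∀ j k i, c.repr ⁅c j, c k⁆ i = algebraMap F E (st j k i)) (g : ι → L)
    (w : FreeMagma ι) (i : κ) :
    c.repr (evalLie g w) i = aeval (fun p : ι × κ => c.repr (g p.1) p.2) (coordPoly st w i) := by
  induction w generalizing i with
  | ih1 j => simp
  | ih2 a b ha hb =>
    rw [evalLie_mul, coordPoly_mul, c.repr_lie]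
    simp only [map_sum, map_mul, aeval_C, ha, hb, hc]
    exact Finset.sum_congr rfl fun j _ => Finset.sum_congr rfl fun k _ => by ring

theorem Module.Basis.det_evalLie_comp [DecidableEq κ]
    (hc : ∀ j k i, c.repr ⁅c j, c k⁆ i = algebraMap F E (st j k i)) (g : ι → L)
    (w : κ → FreeMagma ι) :
    c.det (evalLie g ∘ w) = aeval (fun p : ι × κ => c.repr (g p.1) p.2) (detPoly st w) := by
  rw [detPoly, AlgHom.map_det, c.det_apply]
  congr 1
  ext i i'
  simp [Basis.toMatrix_apply, c.repr_evalLie st hc]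

end StructureConstants

theorem Module.Basis.surjective_coords {E L κ : Type*} [CommRing E] [AddCommGroup L] [Module E L]
    [Fintype κ] (c : Basis κ E L) (ι : Type*) :
    Function.Surjective fun (g : ι → L) (p : ι × κ) => c.repr (g p.1) p.2 := fun a =>
  ⟨fun j => c.equivFun.symm fun i => a (j, i), by
    ext ⟨j, i⟩; exact congrFun (c.equivFun.apply_symm_apply _) i⟩

theorem MvPolynomial.exists_aeval_ne_zero_iff {F E σ : Type*} [CommRing F] [Field E] [Infinite E]
    [Algebra F E] [FaithfulSMul F E] (p : MvPolynomial σ F) :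
    (∃ a : σ → E, aeval a p ≠ 0) ↔ p ≠ 0 := by
  refine ⟨fun ⟨a, ha⟩ hp => ha (by rw [hp, map_zero]), fun hp => ?_⟩
  by_contra! h
  have hmap : map (algebraMap F E) p = 0 :=
    funext fun a => by rw [eval_map, ← aeval_def, h, map_zero]
  exact hp (map_injective _ (FaithfulSMul.algebraMap_injective F E) (by rw [hmap, map_zero]))

theorem LieAlgebra.exists_lieSpan_range_eq_top_iff_exists_detPoly_ne_zero {F E L ι κ : Type*}
    [CommRing F] [Field E] [Infinite E] [Algebra F E] [FaithfulSMul F E] [LieRing L]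
    [LieAlgebra E L] [Fintype κ] [DecidableEq κ] (c : Module.Basis κ E L) (st : κ → κ → κ → F)
    (hc : ∀ j k i, c.repr ⁅c j, c k⁆ i = algebraMap F E (st j k i)) :
    (∃ g : ι → L, LieSubalgebra.lieSpan E L (Set.range g) = ⊤) ↔
      ∃ w : κ → FreeMagma ι, detPoly st w ≠ 0 := by
  simp_rw [LieSubalgebra.lieSpan_range_eq_top_iff, c.span_range_eq_top_iff_exists_det_ne_zero,
    c.det_evalLie_comp st hc]
  rw [exists_comm]
  refine exists_congr fun w => ?_
  rw [← exists_aeval_ne_zero_iff (E := E), (c.surjective_coords ι).exists]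

theorem Set.range_fin_two {α : Type*} (g : Fin 2 → α) : Set.range g = {g 0, g 1} := by
  ext; simp [Fin.exists_fin_two, eq_comm]

theorem LieSubalgebra.exists_lieSpan_pair_eq_top_iff {R L : Type*} [CommRing R] [LieRing L]
    [LieAlgebra R L] :
    (∃ x y : L, lieSpan R L {x, y} = ⊤) ↔ ∃ g : Fin 2 → L, lieSpan R L (Set.range g) = ⊤ :=
  ⟨fun ⟨x, y, h⟩ => ⟨![x, y], by rwa [Matrix.range_cons_cons_empty]⟩,
    fun ⟨g, h⟩ => ⟨g 0, g 1, by rwa [Set.range_fin_two] at h⟩⟩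

theorem generated_by_two_iff_baseChange_generated_by_two_general
    (F K : Type) [Field F] [Infinite F] [Field K] [Algebra F K]
    (L : Type) [LieRing L] [LieAlgebra F L] [FiniteDimensional F L] :
    (∃ x y : L, LieSubalgebra.lieSpan F L {x, y} = ⊤) ↔
      (∃ u v : K ⊗[F] L, LieSubalgebra.lieSpan K (K ⊗[F] L) {u, v} = ⊤) := by
  have : Infinite K := .of_injective _ (algebraMap F K).injective
  let b := finBasis F L
  let st j k i := b.repr ⁅b j, b k⁆ i
  rw [LieSubalgebra.exists_lieSpan_pair_eq_top_iff, LieSubalgebra.exists_lieSpan_pair_eq_top_iff,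
    LieAlgebra.exists_lieSpan_range_eq_top_iff_exists_detPoly_ne_zero b st fun _ _ _ => rfl,
    LieAlgebra.exists_lieSpan_range_eq_top_iff_exists_detPoly_ne_zero (b.baseChange K) st
      b.baseChange_repr_lie]

/-- For an infinite field `F` with algebraic closure `K` and a finite-dimensional
Lie algebra `L` over `F`, `L` is generated by two elements over `F` iff `K ⊗[F] L` is generated
by two elements over `K`. -/
theorem generated_by_two_iff_baseChange_generated_by_two
    (F K : Type) [Field F] [Infinite F] [Field K] [Algebra F K] [IsAlgClosure F K]
    (L : Type) [LieRing L] [LieAlgebra F L] [FiniteDimensional F L] :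
    (∃ x y : L, LieSubalgebra.lieSpan F L {x, y} = ⊤) ↔
      (∃ u v : K ⊗[F] L, LieSubalgebra.lieSpan K (K ⊗[F] L) {u, v} = ⊤) :=
  generated_by_two_iff_baseChange_generated_by_two_general F K L
end

section
/- Let F be an algebraically closed field whose characteristic is either 0 or a prime p > 3, and let n ≥ 1. Consider the Lie algebra gl_n(F) of n × n matrices over F with bracket ⁅A,B⁆ = AB − BA. For every matrix x ∈ gl_n(F) not lying in the center of gl_n(F) (equivalently, x is not a scalar multiple of the identity matrix), there exists y ∈ gl_n(F) such that the smallest Lie subalgebra of gl_n(F) containing x and y is gl_n(F) itself. -/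
/-!
Conjugating suitably, we may assume that every off-diagonal entry of `x` is nonzero: the `(i, j)`
entry of `g x g⁻¹` times `det g` is a polynomial in the entries of `g`, nonzero because `x` is not
scalar, and over the infinite field `F` finitely many nonzero polynomials have a common non-root
in `GL_n`. Take `y = diagonal α` with the roots `α i - α j` (`i ≠ j`) pairwise distinct and
`∑ α i ≠ 0`, again a non-root of a nonzero polynomial; this needs `2 ≠ 0`, as
`α i - α j ≠ α j - α i`. The `E_ij` are eigenvectors of `ad y` with distinct eigenvalues, so every
`ad y`-invariant subspace containing `⁅y, x⁆ = ∑ (α i - α j) x_ij E_ij` contains each `E_ij`.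
The Lie algebra generated by `x` and `y` thus contains every `E_ij` with `i ≠ j`, hence `sl_n`,
and also `y`, whose trace is nonzero.
-/

open Matrix Finset

attribute [local instance 100] LieRing.ofAssociativeRing

theorem Submodule.mem_of_sum_eigenvectors_mem {K V ι : Type*} [Field K] [AddCommGroup V]
    [Module K V] {p : Submodule K V} {f : Module.End K V} (hf : ∀ v ∈ p, f v ∈ p)
    {s : Finset ι} {μ : ι → K} (hμ : Set.InjOn μ s) {m : ι → V}
    (hm : ∀ i ∈ s, f (m i) = μ i • m i) (hsum : ∑ i ∈ s, m i ∈ p) :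
    ∀ i ∈ s, m i ∈ p := by
  classical
  induction s using Finset.induction_on generalizing m with
  | empty => simp
  | insert a s ha ih =>
    rw [sum_insert ha] at hsum
    have hkill : f (m a + ∑ i ∈ s, m i) - μ a • (m a + ∑ i ∈ s, m i)
        = ∑ i ∈ s, (μ i - μ a) • m i := by
      simp only [map_add, map_sum, hm a (mem_insert_self a s), smul_add, smul_sum, sub_smul,
        sum_sub_distrib, sum_congr rfl fun i hi => hm i (mem_insert_of_mem hi)]
      abel
    have hscaled := ih (hμ.mono (by simp)) (m := fun i => (μ i - μ a) • m i)
      (fun i hi => by simp only [map_smul, hm i (mem_insert_of_mem hi), smul_comm (μ i)])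
      (hkill ▸ p.sub_mem (hf _ hsum) (p.smul_mem (μ a) hsum))
    have hrest : ∀ i ∈ s, m i ∈ p := fun i hi => by
      have hne : μ i - μ a ≠ 0 :=
        sub_ne_zero.mpr fun h => ha (hμ (mem_insert_of_mem hi) (mem_insert_self a s) h ▸ hi)
      simpa [smul_smul, inv_mul_cancel₀ hne] using p.smul_mem (μ i - μ a)⁻¹ (hscaled i hi)
    refine forall_mem_insert _ _ _ |>.mpr ⟨?_, hrest⟩
    simpa using p.sub_mem hsum (p.sum_mem hrest)

theorem MvPolynomial.X_sub_X_sub_X_sub_X_ne_zero {R σ : Type*} [CommRing R] [Nontrivial R]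
    (h2 : (2 : R) ≠ 0) {a b c d : σ} (hab : a ≠ b) (h : (a, b) ≠ (c, d)) :
    (X a - X b - (X c - X d) : MvPolynomial σ R) ≠ 0 := by
  classical
  intro h0
  by_cases hca : c = a
  · subst hca
    have hbd : b ≠ d := fun hbd => h (by rw [hbd])
    simpa [hbd.symm] using congrArg (eval (Pi.single b 1)) h0
  · have := congrArg (eval (Pi.single a 1)) h0
    by_cases hda : d = a
    · simp [hab.symm, hca, hda, one_add_one_eq_two, h2] at this
    · simp [hab.symm, hca, hda] at this

open MvPolynomial in
theorem exists_injOn_sub_sum_ne_zero {R ι : Type*} [CommRing R] [IsDomain R] [Infinite R]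
    [Fintype ι] [DecidableEq ι] [Nonempty ι] (h2 : (2 : R) ≠ 0) :
    ∃ α : ι → R, Set.InjOn (fun p : ι × ι => α p.1 - α p.2) {p | p.1 ≠ p.2} ∧ ∑ i, α i ≠ 0 := by
  let D : (ι × ι) × (ι × ι) → MvPolynomial ι R := fun q =>
    X q.1.1 - X q.1.2 - (X q.2.1 - X q.2.2)
  have hD : ∏ q ∈ univ.offDiag.offDiag, D q ≠ 0 := prod_ne_zero_iff.mpr fun q hq => by
    simp only [mem_offDiag, mem_univ, true_and] at hq
    exact X_sub_X_sub_X_sub_X_ne_zero h2 hq.1 hq.2.2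
  have hS : (∑ i, X i : MvPolynomial ι R) ≠ 0 := fun h0 => by
    obtain ⟨i⟩ := ‹Nonempty ι›
    simpa [Pi.single_apply] using congrArg (eval (Pi.single i 1)) h0
  obtain ⟨α, hα⟩ : ∃ α, eval α ((∑ i, X i) * ∏ q ∈ univ.offDiag.offDiag, D q) ≠ 0 := by
    by_contra! h
    exact mul_ne_zero hS hD (MvPolynomial.funext fun α => by simpa using h α)
  rw [map_mul, map_prod] at hα
  refine ⟨α, fun p hp q hq hpq => ?_, by simpa using left_ne_zero_of_mul hα⟩
  by_contra hne
  refine prod_ne_zero_iff.mp (right_ne_zero_of_mul hα) (p, q) (by simp_all) ?_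
  simp only [D, map_sub, eval_X]
  exact sub_eq_zero.mpr hpq

theorem LieSubalgebra.lieSpan_image_eq_top {R L L' : Type*} [CommRing R] [LieRing L]
    [LieAlgebra R L] [LieRing L'] [LieAlgebra R L'] (e : L ≃ₗ⁅R⁆ L') {s : Set L}
    (hs : lieSpan R L s = ⊤) : lieSpan R L' (e '' s) = ⊤ := by
  rw [← LieEquiv.coe_toLieHom, ← LieSubalgebra.map_lieSpan, hs, ← LieSubalgebra.map_top]
  exact e.toLieHom.range_eq_top.mpr e.surjective

namespace Matrix

section CommRing

variable {R ι : Type*} [CommRing R] [Fintype ι] [DecidableEq ι]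

theorem lie_diagonal_single (α : ι → R) (i j : ι) (c : R) :
    ⁅diagonal α, single i j c⁆ = (α i - α j) • single i j c := by
  ext k l
  simp only [Ring.lie_def, sub_apply, diagonal_mul, mul_diagonal, smul_apply, single_apply]
  split_ifs with h
  · rw [h.1, h.2, smul_eq_mul]; ring
  · simp

theorem lie_diagonal_eq_sum (α : ι → R) (x : Matrix ι ι R) :
    ⁅diagonal α, x⁆ = ∑ p ∈ univ.offDiag, (α p.1 - α p.2) • single p.1 p.2 (x p.1 p.2) := by
  conv_lhs => rw [matrix_eq_sum_single x]
  simp only [lie_sum, lie_diagonal_single]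
  rw [← Fintype.sum_prod_type']
  refine (sum_subset (subset_univ _) fun p _ hp => ?_).symm
  simp [(by simpa using hp : p.1 = p.2)]

open LieAlgebra.SpecialLinear in
theorem sl_le_of_single_mem {L : LieSubalgebra R (Matrix ι ι R)}
    (h : ∀ i j, i ≠ j → single i j (1 : R) ∈ L) : sl ι R ≤ L := by
  intro A hA
  replace hA : A.trace = 0 := hA
  cases isEmpty_or_nonempty ι
  · exact Subsingleton.elim (0 : Matrix ι ι R) A ▸ L.zero_mem
  obtain ⟨i₀⟩ := ‹Nonempty ι›
  have hdiag : ∀ i, single i i (1 : R) - single i₀ i₀ 1 ∈ L := fun i => by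
    by_cases hi : i = i₀
    · simp [hi]
    · have := L.lie_mem (h i i₀ hi) (h i₀ i (Ne.symm hi))
      rwa [Ring.lie_def, single_mul_single_same, single_mul_single_same, mul_one] at this
  -- The correction terms add up to `trace A • single i₀ i₀ 1 = 0`.
  have hdecomp : A = ∑ i, ∑ j, A i j • (single i j 1 - if i = j then single i₀ i₀ 1 else 0) := by
    simp_rw [smul_sub, sum_sub_distrib, smul_single, smul_eq_mul, mul_one, ← matrix_eq_sum_single,
      smul_ite, smul_zero, sum_ite_eq, mem_univ, if_true, ← sum_smul]
    simp [show ∑ i, A i i = 0 from hA]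
  rw [hdecomp]
  refine L.toSubmodule.sum_mem fun i _ => L.toSubmodule.sum_mem fun j _ => L.smul_mem _ ?_
  by_cases hij : i = j
  · simpa [hij] using hdiag j
  · simpa [hij] using h i j hij

theorem scalar_mem_center (c : R) :
    scalar ι c ∈ LieAlgebra.center R (Matrix ι ι R) :=
  (LieModule.mem_maxTrivSubmodule R _ _ _).mpr fun y =>
    commute_iff_lie_eq.mp (scalar_commute c (fun _ => Commute.all _ _) y).symm

theorem permMatrixHom_conj_apply (σ : Equiv.Perm ι) (x : Matrix ι ι R) (i j : ι) :
    let g : GL ι R := permMatrixHom.toHomUnits σ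
    (g * x * g⁻¹ : Matrix ι ι R) (σ i) (σ j) = x i j := by
  simp [← map_inv, PEquiv.toMatrix_toPEquiv_mul, PEquiv.mul_toMatrix_toPEquiv]

theorem exists_conj_offDiag_ne_zero_of_ne_scalar {x : Matrix ι ι R}
    (hx : ∀ c, x ≠ scalar ι c) :
    ∃ g : GL ι R, ∃ a b, a ≠ b ∧ (g * x * g⁻¹ : Matrix ι ι R) a b ≠ 0 := by
  by_cases hoff : ∃ a b, a ≠ b ∧ x a b ≠ 0
  · obtain ⟨a, b, hab, h⟩ := hoff
    exact ⟨1, a, b, hab, by simpa using h⟩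
  push Not at hoff
  obtain ⟨a, b, hab⟩ : ∃ a b, x a a ≠ x b b := by
    by_contra! h
    cases isEmpty_or_nonempty ι
    · exact hx 0 (Subsingleton.elim _ _)
    obtain ⟨i⟩ := ‹Nonempty ι›
    refine hx (x i i) (ext fun a b => ?_)
    by_cases hab : a = b
    · simp [hab, h b i]
    · simp [hab, hoff a b hab]
  have hne : a ≠ b := fun h => hab (h ▸ rfl)
  have hE : single a b (1 : R) * single a b 1 = 0 := single_mul_single_of_ne _ _ _ _ hne.symm _
  let g : GL ι R := ⟨1 + single a b 1, 1 - single a b 1, by noncomm_ring; simp [hE],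
    by noncomm_ring; simp [hE]⟩
  refine ⟨g, a, b, hne, ?_⟩
  have : ((1 + single a b 1) * x * (1 - single a b 1) : Matrix ι ι R) a b = x b b - x a a := by
    simp [add_mul, mul_sub, single_mul_apply_same, mul_single_apply_same, hoff a b hne,
      hoff b a hne.symm]
  simpa [g, this] using sub_ne_zero.mpr (Ne.symm hab)

theorem exists_conj_apply_ne_zero {x : Matrix ι ι R} (hx : ∀ c, x ≠ scalar ι c)
    {i j : ι} (hij : i ≠ j) : ∃ g : GL ι R, (g * x * g⁻¹ : Matrix ι ι R) i j ≠ 0 := by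
  obtain ⟨g, a, b, hab, h⟩ := exists_conj_offDiag_ne_zero_of_ne_scalar hx
  obtain ⟨σ, rfl, rfl⟩ := MulAction.is_two_pretransitive_iff.mp
    (Equiv.Perm.isMultiplyPretransitive ι 2) hab hij
  let P : GL ι R := permMatrixHom.toHomUnits σ
  refine ⟨P * g, ?_⟩
  have hPg : ((P * g : GL ι R) * x * (P * g : GL ι R)⁻¹ : Matrix ι ι R)
      = P * (g * x * g⁻¹ : Matrix ι ι R) * P⁻¹ := by
    simp only [_root_.mul_inv_rev, Units.val_mul, mul_assoc]
  rwa [hPg, Equiv.Perm.smul_def, Equiv.Perm.smul_def, permMatrixHom_conj_apply]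

end CommRing

section Field

variable {F ι : Type*} [Field F] [Fintype ι] [DecidableEq ι]

theorem single_mem_of_lie_diagonal {L : LieSubalgebra F (Matrix ι ι F)} {α : ι → F}
    {x : Matrix ι ι F} (hα : Set.InjOn (fun p : ι × ι => α p.1 - α p.2) {p | p.1 ≠ p.2})
    (hx : ∀ i j, i ≠ j → x i j ≠ 0) (hαL : diagonal α ∈ L) (hxL : x ∈ L)
    {i j : ι} (hij : i ≠ j) : single i j (1 : F) ∈ L := by
  have hroot : (α i - α j) * x i j ≠ 0 := by
    refine mul_ne_zero (fun h => hij ?_) (hx i j hij)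
    exact congrArg Prod.fst <| hα (x₁ := (i, j)) (x₂ := (j, i)) hij hij.symm <| by
      show α i - α j = α j - α i
      linear_combination 2 * h
  have hcomp := L.toSubmodule.mem_of_sum_eigenvectors_mem (f := LieAlgebra.ad F _ (diagonal α))
    (fun v hv => L.lie_mem hαL hv) (hα.mono fun p hp => (mem_offDiag.mp hp).2.2)
    (m := fun p => (α p.1 - α p.2) • single p.1 p.2 (x p.1 p.2))
    (fun p _ => by simp only [LieAlgebra.ad_apply, lie_smul, lie_diagonal_single])
    (lie_diagonal_eq_sum α x ▸ L.lie_mem hαL hxL) (i, j) (by simp [hij])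
  have := L.smul_mem ((α i - α j) * x i j)⁻¹ hcomp
  rwa [smul_smul, smul_single, smul_eq_mul, mul_assoc, inv_mul_cancel₀ hroot] at this

theorem _root_.LieSubalgebra.eq_top_of_sl_le {L : LieSubalgebra F (Matrix ι ι F)}
    (hsl : LieAlgebra.SpecialLinear.sl ι F ≤ L) {A : Matrix ι ι F} (hA : A ∈ L)
    (htr : A.trace ≠ 0) : L = ⊤ := by
  refine eq_top_iff.mpr fun B _ => ?_
  have hB : B - (B.trace / A.trace) • A ∈ LieAlgebra.SpecialLinear.sl ι F := by
    show (B - (B.trace / A.trace) • A).trace = 0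
    rw [trace_sub, trace_smul, smul_eq_mul, div_mul_cancel₀ _ htr, sub_self]
  simpa using L.add_mem (hsl hB) (L.smul_mem (B.trace / A.trace) hA)

theorem lieSpan_diagonal_eq_top {α : ι → F}
    (hα : Set.InjOn (fun p : ι × ι => α p.1 - α p.2) {p | p.1 ≠ p.2}) (htr : ∑ i, α i ≠ 0)
    {x : Matrix ι ι F} (hx : ∀ i j, i ≠ j → x i j ≠ 0) :
    LieSubalgebra.lieSpan F (Matrix ι ι F) {x, diagonal α} = ⊤ := by
  have hxL := LieSubalgebra.subset_lieSpan (R := F) (s := {x, diagonal α}) (.inl rfl)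
  have hαL := LieSubalgebra.subset_lieSpan (R := F) (s := {x, diagonal α}) (.inr rfl)
  exact LieSubalgebra.eq_top_of_sl_le
    (sl_le_of_single_mem fun i j hij => single_mem_of_lie_diagonal hα hx hαL hxL hij) hαL
    (by rwa [trace_diagonal])

theorem exists_conj_forall_offDiag_ne_zero [Infinite F] {x : Matrix ι ι F}
    (hx : ∀ i j, i ≠ j → ∃ g : GL ι F, (g * x * g⁻¹ : Matrix ι ι F) i j ≠ 0) :
    ∃ g : GL ι F, ∀ i j, i ≠ j → (g * x * g⁻¹ : Matrix ι ι F) i j ≠ 0 := by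
  let X := mvPolynomialX ι ι F
  let A : Matrix ι ι (MvPolynomial (ι × ι) F) := X * x.map MvPolynomial.C * X.adjugate
  have hdet (g : GL ι F) : IsUnit (g : Matrix ι ι F).det := (isUnit_iff_isUnit_det _).mp g.isUnit
  have heval (g : GL ι F) (i j : ι) :
      MvPolynomial.eval (fun p : ι × ι => (g : Matrix ι ι F) p.1 p.2) (A i j)
        = (g : Matrix ι ι F).det * (g * x * g⁻¹ : Matrix ι ι F) i j := by
    have hadj : (g : Matrix ι ι F).adjugate = (g : Matrix ι ι F).det • ↑g⁻¹ := by
      rw [coe_units_inv, inv_def, smul_smul, Ring.mul_inverse_cancel _ (hdet g), one_smul]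
    have hA : (MvPolynomial.eval fun p : ι × ι => (g : Matrix ι ι F) p.1 p.2).mapMatrix A
        = g * x * (g : Matrix ι ι F).adjugate := by
      rw [map_mul, map_mul, RingHom.map_adjugate, mvPolynomialX_mapMatrix_eval]
      congr 2
      ext
      simp
    calc _ = ((MvPolynomial.eval fun p : ι × ι => (g : Matrix ι ι F) p.1 p.2).mapMatrix A) i j :=
          rfl
      _ = _ := by rw [hA, hadj, Matrix.mul_smul, smul_apply, smul_eq_mul]
  have hprod : ∏ p ∈ univ.offDiag, A p.1 p.2 ≠ 0 := prod_ne_zero_iff.mpr fun p hp hzero => by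
    obtain ⟨g, hg⟩ := hx p.1 p.2 (mem_offDiag.mp hp).2.2
    have := heval g p.1 p.2
    rw [hzero, map_zero] at this
    exact hg ((mul_eq_zero.mp this.symm).resolve_left (hdet g).ne_zero)
  obtain ⟨g, hg⟩ : ∃ g : GL ι F, MvPolynomial.eval (fun p : ι × ι => (g : Matrix ι ι F) p.1 p.2)
      (∏ p ∈ univ.offDiag, A p.1 p.2) ≠ 0 := by
    by_contra! h
    exact hprod (MvPolynomial.eq_of_eval_eq_on_gl (by simpa using h))
  refine ⟨g, fun i j hij => ?_⟩
  rw [map_prod, prod_ne_zero_iff] at hg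
  exact right_ne_zero_of_mul (heval g i j ▸ hg (i, j) (by simpa using hij))

end Field

end Matrix

/-- In `gl_n(F)` (with the commutator bracket) over an algebraically closed field
of characteristic 0 or `p > 3`, every non-central matrix can be completed to a generating pair. -/
theorem gl_generated_by_one_and_a_half
    (F : Type) [Field F] [IsAlgClosed F]
    (hchar : CharP F 0 ∨ ∃ p : ℕ, Nat.Prime p ∧ 3 < p ∧ CharP F p)
    (n : ℕ) (hn : 1 ≤ n) (x : Matrix (Fin n) (Fin n) F)
    (hx : x ∉ LieAlgebra.center F (Matrix (Fin n) (Fin n) F)) :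
    ∃ y : Matrix (Fin n) (Fin n) F,
      LieSubalgebra.lieSpan F (Matrix (Fin n) (Fin n) F) {x, y} = ⊤ := by
  have h2 : (2 : F) ≠ 0 := Ring.two_ne_zero <| by
    rcases hchar with hp | ⟨p, -, hp3, hp⟩
    · rw [ringChar.eq F 0]; norm_num
    · rw [ringChar.eq F p]; omega
  have : Nonempty (Fin n) := ⟨⟨0, hn⟩⟩
  obtain ⟨α, hα, htr⟩ := exists_injOn_sub_sum_ne_zero (ι := Fin n) h2
  have hscalar : ∀ c : F, x ≠ scalar (Fin n) c := fun c hc => hx (hc ▸ scalar_mem_center c)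
  obtain ⟨g, hg⟩ := exists_conj_forall_offDiag_ne_zero fun i j hij =>
    exists_conj_apply_ne_zero hscalar hij
  let e := (lieConj _ (Units.invertible g)).symm
  refine ⟨e (diagonal α), ?_⟩
  have := LieSubalgebra.lieSpan_image_eq_top e (lieSpan_diagonal_eq_top hα htr hg)
  rwa [Set.image_pair, show e (g * x * g⁻¹ : Matrix (Fin n) (Fin n) F) = x by simp [e, mul_assoc]]
    at this
end

section
/- Let F be an algebraically closed field whose characteristic is either 0 or a prime p > 3. Let P be a finite-dimensional Lie algebra over F which is perfect (⁅P,P⁆ = P) and generated by one and a half elements. Let G be a finite-dimensional Lie algebra over F and let π : G → P be a surjective Lie algebra homomorphism whose kernel is the line F·z spanned by a nonzero element z lying in the center of G (so G is a central extension of P with one-dimensional kernel). Then for every x ∈ G not belonging to the center of G, there exists y ∈ G such that the smallest Lie subalgebra of G containing x and y is G itself. -/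
/-- Let `P` be a finite-dimensional perfect Lie algebra generated by one and a
half elements, and let `G` be a central extension of `P` with one-dimensional kernel spanned
by a nonzero central element `z`. Then every non-central element of `G` can be completed to a
generating pair of `G`. -/
theorem central_extension_generated_by_one_and_a_half
    (F : Type) [Field F] [IsAlgClosed F]
    (hchar : CharP F 0 ∨ ∃ p : ℕ, Nat.Prime p ∧ 3 < p ∧ CharP F p)
    (P : Type) [LieRing P] [LieAlgebra F P] [FiniteDimensional F P]
    (hperf : ⁅(⊤ : LieIdeal F P), (⊤ : LieIdeal F P)⁆ = ⊤)
    (hP : ∀ x : P, x ≠ 0 → ∃ y : P, LieSubalgebra.lieSpan F P {x, y} = ⊤)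
    (G : Type) [LieRing G] [LieAlgebra F G] [FiniteDimensional F G]
    (π : G →ₗ⁅F⁆ P) (hsurj : Function.Surjective π)
    (z : G) (hz : z ≠ 0) (hzc : z ∈ LieAlgebra.center F G)
    (hker : ∀ g : G, π g = 0 ↔ g ∈ Submodule.span F ({z} : Set G)) :
    ∀ x : G, x ∉ LieAlgebra.center F G →
      ∃ y : G, LieSubalgebra.lieSpan F G {x, y} = ⊤ := by
  intro x hx
  have hzlie : ∀ g : G, ⁅g, z⁆ = 0 := by
    simpa [LieModule.mem_maxTrivSubmodule] using hzc
  -- π x ≠ 0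
  have hpx : π x ≠ 0 := by
    intro h
    rw [hker] at h
    obtain ⟨c, hc⟩ := Submodule.mem_span_singleton.mp h
    apply hx
    rw [← hc]
    exact Submodule.smul_mem _ c hzc
  have hpz : π z = 0 := (hker z).mpr (Submodule.mem_span_singleton_self z)
  obtain ⟨y₀, hy₀⟩ := hP (π x) hpx
  obtain ⟨y, rfl⟩ := hsurj y₀
  have hpyz : π (y + z) = π y := by simp [hpz]
  -- surjectivity of π restricted to lieSpan {x, w} for suitable w
  have onto : ∀ w : G, π w = π y → ∀ p : P,
      ∃ s ∈ LieSubalgebra.lieSpan F G {x, w}, π s = p := by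
    intro w hw p
    have h1 : LieSubalgebra.lieSpan F P {π x, π y} ≤
        (LieSubalgebra.lieSpan F G {x, w}).map π := by
      apply LieSubalgebra.lieSpan_le.mpr
      rintro q hq
      rcases hq with rfl | hq
      · exact (LieSubalgebra.mem_map _ _ _).mpr
          ⟨x, LieSubalgebra.subset_lieSpan (by simp), rfl⟩
      · rcases hq with rfl
        exact (LieSubalgebra.mem_map _ _ _).mpr
          ⟨w, LieSubalgebra.subset_lieSpan (by simp), hw⟩
    have h2 : p ∈ (LieSubalgebra.lieSpan F G {x, w}).map π := by
      apply h1; rw [hy₀]; trivial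
    obtain ⟨s, hs, hsp⟩ := (LieSubalgebra.mem_map _ _ _).mp h2
    exact ⟨s, hs, hsp⟩
  -- if z lies in the span, the span is everything
  have top_of : ∀ w : G, π w = π y → z ∈ LieSubalgebra.lieSpan F G {x, w} →
      LieSubalgebra.lieSpan F G {x, w} = ⊤ := by
    intro w hw hzw
    rw [eq_top_iff]
    intro g _
    obtain ⟨s, hs, hsp⟩ := onto w hw (π g)
    have h0 : π (g - s) = 0 := by simp [hsp]
    rw [hker] at h0
    obtain ⟨c, hc⟩ := Submodule.mem_span_singleton.mp h0
    have : g = s + c • z := by rw [hc]; abel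
    rw [this]
    exact add_mem hs (LieSubalgebra.smul_mem _ c hzw)
  by_cases hzS : z ∈ LieSubalgebra.lieSpan F G {x, y}
  · exact ⟨y, top_of y rfl hzS⟩
  · -- dichotomy: then z ∈ lieSpan {x, y + z}
    refine ⟨y + z, top_of (y + z) hpyz ?_⟩
    -- brackets only depend on the images under π
    have hbr : ∀ g g' h : G, π g = π g' → ⁅g, h⁆ = ⁅g', h⁆ := by
      intro g g' h hg
      have h0 : π (g - g') = 0 := by simp [hg]
      rw [hker] at h0
      obtain ⟨c, hc⟩ := Submodule.mem_span_singleton.mp h0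
      have : g = g' + c • z := by rw [hc]; abel
      have hz0 : ⁅z, h⁆ = 0 := by rw [← lie_skew, hzlie, neg_zero]
      rw [this, add_lie, smul_lie, hz0, smul_zero, add_zero]
    have hbr2 : ∀ g g' h h' : G, π g = π g' → π h = π h' → ⁅g, h⁆ = ⁅g', h'⁆ := by
      intro g g' h h' hg hh
      rw [hbr g g' h hg, ← lie_skew, hbr h h' g' hh, lie_skew]
    -- the intersection of the two spans maps onto P
    set S := LieSubalgebra.lieSpan F G {x, y} with hS
    set S' := LieSubalgebra.lieSpan F G {x, y + z} with hS'
    have hQ : ∀ p : P, ∃ m, m ∈ S ∧ m ∈ S' ∧ π m = p := by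
      intro p
      have hmem : p ∈ (⁅(⊤ : LieIdeal F P), (⊤ : LieIdeal F P)⁆ : LieIdeal F P) := by
        rw [hperf]; trivial
      rw [← LieSubmodule.mem_toSubmodule, LieSubmodule.lieIdeal_oper_eq_linear_span'] at hmem
      have htop : Submodule.span F { m : P | ∃ a ∈ (⊤ : LieIdeal F P), ∃ b ∈ (⊤ : LieIdeal F P),
          ⁅a, b⁆ = m } ≤ Submodule.map (π.toLinearMap : G →ₗ[F] P)
          (S.toSubmodule ⊓ S'.toSubmodule) := by
        apply Submodule.span_le.mpr
        rintro q ⟨a, -, b, -, rfl⟩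
        obtain ⟨s, hs, hsp⟩ := onto (y + z) hpyz a
        obtain ⟨t, ht, htp⟩ := onto (y + z) hpyz b
        obtain ⟨s₀, hs₀, hs₀p⟩ := onto y rfl a
        obtain ⟨t₀, ht₀, ht₀p⟩ := onto y rfl b
        refine ⟨⁅s, t⁆, ⟨?_, ?_⟩, ?_⟩
        · have : ⁅s, t⁆ = ⁅s₀, t₀⁆ := hbr2 s s₀ t t₀ (by rw [hsp, hs₀p]) (by rw [htp, ht₀p])
          rw [this]; exact S.lie_mem hs₀ ht₀
        · exact S'.lie_mem hs ht
        · simp [hsp, htp]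
      have hp : p ∈ Submodule.map (π.toLinearMap : G →ₗ[F] P)
          (S.toSubmodule ⊓ S'.toSubmodule) := htop hmem
      obtain ⟨m, hm, hmp⟩ := hp
      exact ⟨m, hm.1, hm.2, hmp⟩
    obtain ⟨m, hmS, hmS', hm⟩ := hQ (π y)
    have h0 : π (y + z - m) = 0 := by simp [hm, hpz]
    rw [hker] at h0
    obtain ⟨c, hc⟩ := Submodule.mem_span_singleton.mp h0
    by_cases hc1 : c = 1
    · have hzeq : z = (y + z) - m := by
        rw [hc1, one_smul] at hc; rw [← hc]
      rw [hzeq]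
      exact sub_mem (LieSubalgebra.subset_lieSpan (by simp)) hmS'
    · exfalso
      apply hzS
      have hy : y ∈ S := LieSubalgebra.subset_lieSpan (by simp)
      have hms : m - y ∈ S := sub_mem hmS hy
      have hkey : (1 - c) • z = m - y := by
        have : c • z = y + z - m := hc
        rw [sub_smul, one_smul]
        rw [this]; abel
      have hne : (1 : F) - c ≠ 0 := sub_ne_zero.mpr (fun h => hc1 h.symm)
      have : z = ((1 : F) - c)⁻¹ • (m - y) := by
        rw [← hkey, smul_smul, inv_mul_cancel₀ hne, one_smul]
      rw [this]
      exact LieSubalgebra.smul_mem _ _ hms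
end

section
/- Let p > 3 be a prime, F a field of characteristic p, and m ≥ 1. Let B_m = F[X_1, …, X_m]/(X_1^p, …, X_m^p) and let ξ_1, …, ξ_k ∈ B_m be homogeneous elements of degree 1, that is, elements of the F-linear span of the images x_1, …, x_m of the variables. Then ξ_1, …, ξ_k are linearly dependent over F if and only if the product ξ_1^{p−1} ξ_2^{p−1} ⋯ ξ_k^{p−1} equals 0 in B_m. -/
open MvPolynomial

set_option synthInstance.maxHeartbeats 1000000
set_option maxHeartbeats 1000000

/-- The truncated polynomial algebra `B_m = F[X_1, …, X_m]/(X_1^p, …, X_m^p)`. -/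
noncomputable abbrev TruncPoly (F : Type) [Field F] (p m : ℕ) : Type :=
  MvPolynomial (Fin m) F ⧸
    Ideal.span (Set.range fun i : Fin m => (X i : MvPolynomial (Fin m) F) ^ p)

/-- The image `x_i` in `B_m` of the variable `X_i`. -/
noncomputable def xVar (F : Type) [Field F] (p m : ℕ) (i : Fin m) : TruncPoly F p m :=
  Ideal.Quotient.mk _ (X i)

/-!
In characteristic `p` every linear form `ξ` of `B_m` satisfies `ξ ^ p = 0`. If `ξ_{j₀}` is a
combination of the other `ξ_j`, it is therefore killed by `∏_{j ≠ j₀} ξ_j ^ (p-1)`, and the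
whole product vanishes. Conversely, linearly independent linear forms can be sent to the
variables `x_1, …, x_k` of `B_k` by an algebra map `B_m → B_k` (a linear change of variables
is compatible with the relations `x_i ^ p = 0`), and `x_1^(p-1) ⋯ x_k^(p-1)` is a nonzero
monomial of `B_k`.
-/

theorem prod_pow_eq_zero_of_not_linearIndependent {K A ι : Type*} [Field K] [CommRing A]
    [Algebra K A] [Fintype ι] [DecidableEq ι] {v : ι → A} {n : ℕ} (hn : n ≠ 0)
    (hv : ∀ i, v i ^ (n + 1) = 0) (h : ¬ LinearIndependent K v) : ∏ i, v i ^ n = 0 := by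
  obtain ⟨g, hg, i, hi⟩ := Fintype.not_linearIndependent_iff.mp h
  have hP : ∀ j ≠ i, v j * ∏ l ∈ Finset.univ.erase i, v l ^ n = 0 := fun j hj => by
    rw [← Finset.mul_prod_erase _ _ (Finset.mem_erase.mpr ⟨hj, Finset.mem_univ j⟩),
      ← mul_assoc, ← pow_succ', hv, zero_mul]
  have hiP : v i * ∏ l ∈ Finset.univ.erase i, v l ^ n = 0 := by
    have : ∑ j, g j • (v j * ∏ l ∈ Finset.univ.erase i, v l ^ n) =
        g i • (v i * ∏ l ∈ Finset.univ.erase i, v l ^ n) :=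
      Finset.sum_eq_single i (fun j _ hj => by rw [hP j hj, smul_zero]) (by simp)
    rw [← smul_eq_zero_iff_right hi, ← this]
    simp only [← smul_mul_assoc, ← Finset.sum_mul, hg, zero_mul]
  obtain ⟨n, rfl⟩ := Nat.exists_eq_add_one_of_ne_zero hn
  rw [← Finset.mul_prod_erase _ _ (Finset.mem_univ i), pow_succ, mul_assoc, hiP, mul_zero]

theorem pow_char_eq_zero_of_mem_span {F A : Type*} [Field F] [CommRing A] [Algebra F A]
    (p : ℕ) [Fact p.Prime] [CharP F p] {s : Set A} (hs : ∀ a ∈ s, a ^ p = 0) {y : A}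
    (hy : y ∈ Submodule.span F s) : y ^ p = 0 := by
  nontriviality A
  have := charP_of_injective_algebraMap' F (A := A) p
  induction hy using Submodule.span_induction with
  | mem a ha => exact hs a ha
  | zero => exact zero_pow (Fact.out : p.Prime).ne_zero
  | add a b _ _ ha hb => rw [add_pow_char, ha, hb, add_zero]
  | smul c a _ ha => rw [smul_pow, ha, smul_zero]

section TruncPoly

variable {F : Type} [Field F] {p : ℕ}

theorem xVar_pow_eq_zero (m : ℕ) (i : Fin m) : xVar F p m i ^ p = 0 := by
  rw [xVar, ← map_pow, Ideal.Quotient.eq_zero_iff_mem]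
  exact Ideal.subset_span ⟨i, rfl⟩

theorem pow_eq_zero_of_mem_span_xVar (hp : p.Prime) [CharP F p] {m : ℕ} {y : TruncPoly F p m}
    (hy : y ∈ Submodule.span F (Set.range (xVar F p m))) : y ^ p = 0 :=
  haveI := Fact.mk hp
  pow_char_eq_zero_of_mem_span p (by rintro _ ⟨i, rfl⟩; exact xVar_pow_eq_zero m i) hy

theorem prod_xVar_pow_ne_zero {n : ℕ} (hn : n < p) (k : ℕ) :
    ∏ j, xVar F p k j ^ n ≠ 0 := by
  have hprod : ∏ j, xVar F p k j ^ n =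
      Ideal.Quotient.mk _ (monomial (∑ j, Finsupp.single j n) (1 : F)) := by
    simp only [monomial_sum_one, ← X_pow_eq_monomial, map_prod, map_pow, xVar]
  have hgen : (Set.range fun i : Fin k => (X i : MvPolynomial (Fin k) F) ^ p) =
      (fun d => monomial d 1) '' Set.range fun i => Finsupp.single i p := by
    rw [← Set.range_comp]
    simp only [Function.comp_def, X_pow_eq_monomial]
  rw [hprod, Ne, Ideal.Quotient.eq_zero_iff_mem, hgen, mem_ideal_span_monomial_image]
  intro hmem
  obtain ⟨_, ⟨i, rfl⟩, hle⟩ :=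
    hmem _ (mem_support_iff.mpr (by rw [coeff_monomial, if_pos rfl]; exact one_ne_zero))
  have : p ≤ n := by simpa [Finsupp.finsetSum_apply] using Finsupp.single_le_iff.mp hle
  omega

variable (F p) in
noncomputable def TruncPoly.lift {A : Type*} [CommRing A] [Algebra F A] {m : ℕ} (y : Fin m → A)
    (hy : ∀ i, y i ^ p = 0) : TruncPoly F p m →ₐ[F] A :=
  Ideal.Quotient.liftₐ _ (aeval y) fun _ hf => RingHom.mem_ker.mp <|
    (Ideal.span_le (I := RingHom.ker (aeval y)).mpr (by rintro _ ⟨i, rfl⟩; simp [hy])) hf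

theorem TruncPoly.lift_xVar {A : Type*} [CommRing A] [Algebra F A] {m : ℕ} (y : Fin m → A)
    (hy : ∀ i, y i ^ p = 0) (i : Fin m) : TruncPoly.lift F p y hy (xVar F p m i) = y i :=
  aeval_X y i

theorem exists_algHom_map_eq_xVar (hp : p.Prime) [CharP F p] {m k : ℕ}
    {ξ : Fin k → TruncPoly F p m}
    (hξ : ∀ j, ξ j ∈ Submodule.span F (Set.range (xVar F p m))) (hind : LinearIndependent F ξ) :
    ∃ φ : TruncPoly F p m →ₐ[F] TruncPoly F p k, ∀ j, φ (ξ j) = xVar F p k j := by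
  obtain ⟨ψ, hψ⟩ := (Fintype.linearCombination F ξ).exists_leftInverse_of_injective
    (LinearMap.ker_eq_bot.mpr hind.fintypeLinearCombination_injective)
  set L := Fintype.linearCombination F (xVar F p k) ∘ₗ ψ
  have hL : ∀ a, L a ∈ Submodule.span F (Set.range (xVar F p k)) := fun a => by
    rw [← Fintype.range_linearCombination]; exact ⟨_, rfl⟩
  have hy : ∀ i, L (xVar F p m i) ^ p = 0 := fun i => pow_eq_zero_of_mem_span_xVar hp (hL _)
  refine ⟨TruncPoly.lift F p _ hy, fun j => ?_⟩
  have hφL : TruncPoly.lift F p _ hy (ξ j) = L (ξ j) :=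
    LinearMap.eqOn_span (f := (TruncPoly.lift F p _ hy).toLinearMap) (g := L)
      (by rintro _ ⟨i, rfl⟩; exact TruncPoly.lift_xVar _ hy i) (hξ j)
  have hψξ : ψ (ξ j) = Pi.single j 1 := by
    simpa using LinearMap.congr_fun hψ (Pi.single j 1)
  rw [hφL, LinearMap.comp_apply, hψξ, Fintype.linearCombination_apply_single, one_smul]

end TruncPoly

theorem linearDependent_iff_prod_pow_eq_zero_general
    (p : ℕ) (hp : p.Prime) (F : Type) [Field F] [CharP F p]
    (m : ℕ) (k : ℕ) (ξ : Fin k → TruncPoly F p m)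
    (hξ : ∀ j, ξ j ∈ Submodule.span F (Set.range (xVar F p m))) :
    ¬ LinearIndependent F ξ ↔ (∏ j : Fin k, ξ j ^ (p - 1)) = 0 := by
  have hp1 : p - 1 + 1 = p := Nat.sub_add_cancel hp.one_le
  constructor
  · exact prod_pow_eq_zero_of_not_linearIndependent (K := F) (Nat.sub_ne_zero_of_lt hp.one_lt)
      fun j => by rw [hp1]; exact pow_eq_zero_of_mem_span_xVar hp (hξ j)
  · intro hprod hind
    obtain ⟨φ, hφ⟩ := exists_algHom_map_eq_xVar hp hξ hind
    apply prod_xVar_pow_ne_zero (F := F) (Nat.sub_lt hp.pos one_pos) k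
    simpa [hφ] using congrArg φ hprod

/-- Degree-one homogeneous elements `ξ_1, …, ξ_k` of `B_m` are linearly
dependent over `F` iff `ξ_1^(p-1) ⋯ ξ_k^(p-1) = 0` in `B_m`. -/
theorem linearDependent_iff_prod_pow_eq_zero
    (p : ℕ) (hp : p.Prime) (hp3 : 3 < p) (F : Type) [Field F] [CharP F p]
    (m : ℕ) (hm : 1 ≤ m) (k : ℕ) (ξ : Fin k → TruncPoly F p m)
    (hξ : ∀ j, ξ j ∈ Submodule.span F (Set.range (xVar F p m))) :
    ¬ LinearIndependent F ξ ↔ (∏ j : Fin k, ξ j ^ (p - 1)) = 0 :=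
  linearDependent_iff_prod_pow_eq_zero_general p hp F m k ξ hξ
end

section
/- Let F be an algebraically closed field of prime characteristic p, V a finite-dimensional F-vector space, and u an F-linear endomorphism of V. Then for every natural number k, the p-order of u^{p^k} equals the p-order of u: ord(u^{p^k}) = ord(u). -/
/-!
The eigenvalues of `u ^ p ^ k` are the images of those of `u` under the iterated Frobenius
`x ↦ x ^ p ^ k`. This map is additive, hence `𝔽_p`-linear, and injective, so it carries
`Λ(u)` isomorphically onto `Λ(u ^ p ^ k)`.
-/

attribute [local instance] ZMod.algebra

/-- `Λ(u)`: the `𝔽_p`-subspace of `F` spanned by the eigenvalues of `u`. -/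
noncomputable def pLambda (p : ℕ) {F : Type} [Field F] [CharP F p]
    {V : Type} [AddCommGroup V] [Module F V] (u : Module.End F V) :
    Submodule (ZMod p) F :=
  Submodule.span (ZMod p) {μ : F | Module.End.HasEigenvalue u μ}

/-- The `p`-order of `u`: the dimension of `Λ(u)` over the prime field `𝔽_p`. -/
noncomputable def pOrd (p : ℕ) {F : Type} [Field F] [CharP F p]
    {V : Type} [AddCommGroup V] [Module F V] (u : Module.End F V) : ℕ :=
  Module.finrank (ZMod p) (pLambda p u)

/-!
The eigenvalues of `u ^ p ^ k` are the images of those of `u` under the iterated Frobenius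
`x ↦ x ^ p ^ k`. This map is additive, hence `𝔽_p`-linear, and injective, so it carries
`Λ(u)` isomorphically onto `Λ(u ^ p ^ k)`.
-/

theorem Module.End.setOf_hasEigenvalue_pow {K V : Type*} [Field K] [IsAlgClosed K]
    [AddCommGroup V] [Module K V] [FiniteDimensional K V] (u : Module.End K V) {n : ℕ}
    (hn : 0 < n) :
    {μ : K | (u ^ n).HasEigenvalue μ} = (· ^ n) '' {μ : K | u.HasEigenvalue μ} := by
  simp only [Module.End.hasEigenvalue_iff_mem_spectrum]
  exact spectrum.map_pow_of_pos u hn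

theorem pLambda_pow_char_pow {p : ℕ} [Fact p.Prime] {F : Type} [Field F] [IsAlgClosed F]
    [CharP F p] {V : Type} [AddCommGroup V] [Module F V] [FiniteDimensional F V]
    (u : Module.End F V) (k : ℕ) :
    pLambda p (u ^ p ^ k) =
      (pLambda p u).map ((iterateFrobenius F p k).toAddMonoidHom.toZModLinearMap p) := by
  rw [pLambda, pLambda, Submodule.map_span,
    Module.End.setOf_hasEigenvalue_pow u (pow_pos (Fact.out : p.Prime).pos k)]
  rfl

/-- Over an algebraically closed field of prime characteristic `p`, the `p`-order
of `u^(p^k)` equals the `p`-order of `u`, for every endomorphism `u` of a finite-dimensional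
vector space and every `k`. -/
theorem pOrd_pow_p_pow (p : ℕ) (hp : p.Prime) (F : Type) [Field F] [IsAlgClosed F] [CharP F p]
    (V : Type) [AddCommGroup V] [Module F V] [FiniteDimensional F V]
    (u : Module.End F V) (k : ℕ) :
    pOrd p (u ^ p ^ k) = pOrd p u := by
  have : Fact p.Prime := ⟨hp⟩
  rw [pOrd, pOrd, pLambda_pow_char_pow]
  exact (Submodule.equivMapOfInjective _ (iterateFrobenius F p k).injective _).finrank_eq.symm
end

section
/- Let F be an algebraically closed field of prime characteristic p, V a finite-dimensional F-vector space, and u a semisimple F-linear endomorphism of V. Let r = ord(u) be the p-order of u, so that Λ(u) is a finite set of cardinality p^r, and let f_u(t) = ∏_{λ ∈ Λ(u)} (t − λ). Then: (i) f_u(u) = 0; (ii) f_u is a p-polynomial of degree p^r, and every nonzero p-polynomial g with g(u) = 0 has degree at least p^r (f_u is the minimal p-polynomial of u); (iii) the F-linear span of the set {u^{p^j} : j ≥ 0} inside End_F(V) has dimension r over F. -/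
attribute [local instance] ZMod.algebra

/-- A `p`-polynomial: a polynomial of the form `a_0 t + a_1 t^p + ⋯ + a_k t^(p^k)`. -/
def IsPPoly (p : ℕ) {F : Type} [Field F] (f : Polynomial F) : Prop :=
  ∃ (k : ℕ) (a : ℕ → F),
    f = ∑ j ∈ Finset.range (k + 1), Polynomial.C (a j) * Polynomial.X ^ p ^ j

/-!
Write `Λ = Λ(u)`. Adding one generator `β ∉ Λ'` at a time, the vanishing polynomial `Q` of
`Λ'` is additive and `𝔽_p`-linear as a function, so the vanishing polynomial of `Λ' + 𝔽_p β` is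
`∏_j Q(X - jβ) = ∏_j (Q - j Q(β)) = Q^p - Q(β)^(p-1) Q`. Hence `f_u` is `X^(p^r)` plus an
`F`-combination of the `X^(p^j)`, `j < r`. As `u` is semisimple, its minimal polynomial is
`∏ (X - μ)` over the eigenvalues, which divides `f_u`. The roots of a `p`-polynomial `g` form an
`𝔽_p`-space, so if `g(u) = 0` they contain `Λ` and `deg g ≥ p^r`. Finally `f_u(u) = 0` writes
`u^(p^r)` in terms of the `u^(p^j)`, `j < r`, and Frobenius carries this to every `u^(p^m)`,
while minimality makes these `r` powers independent.
-/

open Polynomial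

noncomputable def pPolysLT (F : Type*) [Field F] (p n : ℕ) : Submodule F F[X] :=
  Submodule.span F (Set.range fun j : Fin n => (X : F[X]) ^ p ^ (j : ℕ))

section PPolys

variable {F : Type*} [Field F] {p : ℕ}

theorem X_pow_pow_mem_pPolysLT {j n : ℕ} (h : j < n) : (X : F[X]) ^ p ^ j ∈ pPolysLT F p n :=
  Submodule.subset_span ⟨⟨j, h⟩, rfl⟩

theorem pPolysLT_mono {m n : ℕ} (h : m ≤ n) : pPolysLT F p m ≤ pPolysLT F p n :=
  Submodule.span_le.mpr <| Set.range_subset_iff.mpr fun j =>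
    X_pow_pow_mem_pPolysLT (j.isLt.trans_le h)

theorem mem_pPolysLT_succ_of_sub_X_pow_pow_mem {Q : F[X]} {n : ℕ}
    (hQ : Q - X ^ p ^ n ∈ pPolysLT F p n) : Q ∈ pPolysLT F p (n + 1) := by
  simpa using add_mem (pPolysLT_mono n.le_succ hQ) (X_pow_pow_mem_pPolysLT n.lt_succ_self)

theorem pPolysLT_le_degreeLT (hp : 1 < p) (n : ℕ) : pPolysLT F p n ≤ degreeLT F (p ^ n) :=
  Submodule.span_le.mpr <| Set.range_subset_iff.mpr fun j => by
    rw [SetLike.mem_coe, mem_degreeLT, degree_X_pow]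
    exact_mod_cast Nat.pow_lt_pow_right hp j.isLt

theorem natDegree_eq_of_sub_X_pow_pow_mem_pPolysLT (hp : 1 < p) {f : F[X]} {n : ℕ}
    (hf : f - X ^ p ^ n ∈ pPolysLT F p n) : f.natDegree = p ^ n := by
  have hdeg : (f - X ^ p ^ n).degree < (X ^ p ^ n : F[X]).degree := by
    rw [degree_X_pow, ← mem_degreeLT]
    exact pPolysLT_le_degreeLT hp n hf
  have h := degree_add_eq_right_of_degree_lt hdeg
  rw [sub_add_cancel, degree_X_pow] at h
  exact natDegree_eq_of_degree_eq_some h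

theorem natDegree_lt_of_mem_pPolysLT (hp : 1 < p) {g : F[X]} {n : ℕ} (hg : g ∈ pPolysLT F p n)
    (hg0 : g ≠ 0) : g.natDegree < p ^ n :=
  (natDegree_lt_iff_degree_lt hg0).mpr (mem_degreeLT.mp (pPolysLT_le_degreeLT hp n hg))

theorem linearIndependent_X_pow_pow (hp : 1 < p) (n : ℕ) :
    LinearIndependent F fun j : Fin n => (X : F[X]) ^ p ^ (j : ℕ) := by
  have := (basisMonomials F).linearIndependent.comp (fun j : Fin n => p ^ (j : ℕ))
    ((Nat.pow_right_injective hp).comp Fin.val_injective)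
  simpa [Function.comp_def, coe_basisMonomials, ← C_mul_X_pow_eq_monomial] using this

theorem finrank_map_pPolysLT_of_disjoint {M : Type*} [AddCommGroup M] [Module F M] (hp : 1 < p)
    {n : ℕ} {φ : F[X] →ₗ[F] M} (h : Disjoint (pPolysLT F p n) (LinearMap.ker φ)) :
    Module.finrank F ((pPolysLT F p n).map φ) = n := by
  rw [pPolysLT.eq_def, Submodule.map_span, ← Set.range_comp,
    finrank_span_eq_card ((linearIndependent_X_pow_pow hp n).map h), Fintype.card_fin]

variable [Fact p.Prime] [CharP F p]

theorem pow_mem_pPolysLT_succ {g : F[X]} {n : ℕ} (hg : g ∈ pPolysLT F p n) :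
    g ^ p ∈ pPolysLT F p (n + 1) := by
  induction hg using Submodule.span_induction with
  | mem _ h =>
    obtain ⟨j, rfl⟩ := h
    rw [← pow_mul, ← pow_succ]
    exact X_pow_pow_mem_pPolysLT (Nat.succ_lt_succ j.isLt)
  | zero => rw [zero_pow (Fact.out : p.Prime).ne_zero]; exact zero_mem _
  | add a b _ _ ha hb => rw [add_pow_char]; exact add_mem ha hb
  | smul c a _ ha => rw [_root_.smul_pow]; exact Submodule.smul_mem _ _ ha

theorem pow_sub_C_mul_sub_X_pow_pow_mem_pPolysLT {Q : F[X]} {n : ℕ}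
    (hQ : Q - X ^ p ^ n ∈ pPolysLT F p n) (c : F) :
    Q ^ p - C c * Q - X ^ p ^ (n + 1) ∈ pPolysLT F p (n + 1) := by
  have h : Q ^ p - C c * Q - X ^ p ^ (n + 1) = (Q - X ^ p ^ n) ^ p - c • Q := by
    rw [sub_pow_char, ← pow_mul, ← pow_succ, smul_eq_C_mul]
    ring
  rw [h]
  exact sub_mem (pow_mem_pPolysLT_succ hQ)
    (Submodule.smul_mem _ _ (mem_pPolysLT_succ_of_sub_X_pow_pow_mem hQ))

end PPolys

theorem isPPoly_iff_exists_mem_pPolysLT {F : Type} [Field F] {p : ℕ} {g : F[X]} :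
    IsPPoly p g ↔ ∃ n, g ∈ pPolysLT F p n := by
  constructor
  · rintro ⟨k, a, rfl⟩
    refine ⟨k + 1, Submodule.sum_mem _ fun j hj => ?_⟩
    rw [← smul_eq_C_mul]
    exact Submodule.smul_mem _ _ (X_pow_pow_mem_pPolysLT (Finset.mem_range.mp hj))
  · rintro ⟨n, hg⟩
    obtain ⟨c, rfl⟩ := (Submodule.mem_span_range_iff_exists_fun F).mp hg
    refine ⟨n, fun j => if h : j < n then c ⟨j, h⟩ else 0, ?_⟩
    simp [Finset.sum_range_succ, ← Fin.sum_univ_eq_sum_range, smul_eq_C_mul]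

section Additive

variable {F : Type*} [Field F] {p : ℕ} [Fact p.Prime]

theorem aeval_add_of_mem_pPolysLT {A : Type*} [CommRing A] [Algebra F A] [CharP A p]
    {g : F[X]} {n : ℕ} (hg : g ∈ pPolysLT F p n) (a b : A) :
    aeval (a + b) g = aeval a g + aeval b g := by
  induction hg using Submodule.span_induction with
  | mem _ h =>
    obtain ⟨j, rfl⟩ := h
    simp only [map_pow, aeval_X, add_pow_char_pow]
  | zero => simp only [map_zero, add_zero]
  | add g h _ _ hg hh => simp only [map_add, hg, hh]; abel
  | smul c g _ hg => simp only [map_smul, hg, smul_add]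

noncomputable def aevalZModLinearMap (A : Type*) [CommRing A] [Algebra F A] [CharP A p]
    {g : F[X]} {n : ℕ} (hg : g ∈ pPolysLT F p n) : A →ₗ[ZMod p] A :=
  (AddMonoidHom.mk' (fun a => aeval a g) (aeval_add_of_mem_pPolysLT hg)).toZModLinearMap p

@[simp]
theorem aevalZModLinearMap_apply {A : Type*} [CommRing A] [Algebra F A] [CharP A p]
    {g : F[X]} {n : ℕ} (hg : g ∈ pPolysLT F p n) (a : A) :
    aevalZModLinearMap A hg a = aeval a g :=
  rfl

variable [CharP F p]

theorem comp_X_sub_C_of_mem_pPolysLT {g : F[X]} {n : ℕ} (hg : g ∈ pPolysLT F p n) (t : F) :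
    g.comp (X - C t) = g - C (g.eval t) := by
  have h := (aevalZModLinearMap F[X] hg).map_sub X (C t)
  simp only [aevalZModLinearMap_apply, ← comp_eq_aeval, comp_X, comp_C] at h
  exact h

theorem eval_smul_of_mem_pPolysLT {g : F[X]} {n : ℕ} (hg : g ∈ pPolysLT F p n) (j : ZMod p)
    (t : F) : g.eval (j • t) = j • g.eval t := by
  simpa only [aevalZModLinearMap_apply, coe_aeval_eq_eval] using
    (aevalZModLinearMap F hg).map_smul j t

end Additive

section ProdIdentity

variable {p : ℕ}

theorem ZMod.prod_X_sub_C [Fact p.Prime] : ∏ j : ZMod p, (X - C j) = (X ^ p - X : (ZMod p)[X]) := by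
  have hp : 1 < p := (Fact.out : p.Prime).one_lt
  have hroots := FiniteField.roots_X_pow_card_sub_X (ZMod p)
  rw [ZMod.card] at hroots
  have hmonic : (X ^ p - X : (ZMod p)[X]).Monic :=
    monic_X_pow_sub (by rw [degree_X]; exact_mod_cast hp)
  have hcard : Multiset.card (X ^ p - X : (ZMod p)[X]).roots
      = (X ^ p - X : (ZMod p)[X]).natDegree := by
    rw [hroots, FiniteField.X_pow_card_sub_X_natDegree_eq _ hp, Finset.card_val,
      Finset.card_univ, ZMod.card]
  rw [← prod_multiset_X_sub_C_of_monic_of_roots_card_eq hmonic hcard, hroots]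
  rfl

theorem prod_sub_zmod_smul_unit [Fact p.Prime] {A : Type*} [CommRing A] [CharP A p] (y : A)
    (v : Aˣ) : ∏ j : ZMod p, (y - j • (v : A)) = y ^ p - (v : A) ^ (p - 1) * y := by
  have key := congrArg (aeval (y * ↑v⁻¹)) (ZMod.prod_X_sub_C (p := p))
  simp only [map_prod, map_sub, map_pow, aeval_X, aeval_C] at key
  calc ∏ j : ZMod p, (y - j • (v : A))
      = ∏ j : ZMod p, (v : A) * (y * ↑v⁻¹ - algebraMap (ZMod p) A j) := by
        refine Finset.prod_congr rfl fun j _ => ?_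
        rw [mul_sub, mul_left_comm, Units.mul_inv, mul_one, Algebra.smul_def, mul_comm]
    _ = (v : A) ^ p * ((y * ↑v⁻¹) ^ p - y * ↑v⁻¹) := by
        rw [Finset.prod_mul_distrib, Finset.prod_const, Finset.card_univ, ZMod.card, key]
    _ = y ^ p - (v : A) ^ (p - 1) * y := by
        obtain ⟨k, rfl⟩ : ∃ k, p = k + 1 :=
          ⟨p - 1, (Nat.succ_pred_eq_of_pos (Fact.out : p.Prime).pos).symm⟩
        calc (v : A) ^ (k + 1) * ((y * ↑v⁻¹) ^ (k + 1) - y * ↑v⁻¹)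
            = y ^ (k + 1) * ((v : A) * ↑v⁻¹) ^ (k + 1) - (v : A) ^ k * y * ((v : A) * ↑v⁻¹) := by
              ring
          _ = y ^ (k + 1) - (v : A) ^ (k + 1 - 1) * y := by simp

variable {F : Type*} [Field F] [CharP F p]

-- On the left `ZMod p` acts on `F[X]` through `ZMod.algebra`, which is not syntactically the
-- coefficientwise action.
theorem zmod_smul_C (j : ZMod p) (e : F) : j • C e = C (j • e) := by
  rw [Algebra.smul_def, Algebra.smul_def, C_mul]
  congr 1
  exact (DFunLike.congr_fun (RingHom.ext_zmod (C.comp (algebraMap (ZMod p) F)) _) j).symm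

theorem prod_comp_X_sub_C_smul [Fact p.Prime] {Q : F[X]} {n : ℕ} (hQ : Q ∈ pPolysLT F p n)
    {β : F} (hβ : Q.eval β ≠ 0) :
    ∏ j : ZMod p, Q.comp (X - C (j • β)) = Q ^ p - C (Q.eval β ^ (p - 1)) * Q := by
  have h := prod_sub_zmod_smul_unit Q (isUnit_C.mpr (isUnit_iff_ne_zero.mpr hβ)).unit
  simp only [IsUnit.unit_spec, ← C_pow] at h
  rw [← h]
  refine Finset.prod_congr rfl fun j _ => ?_
  rw [comp_X_sub_C_of_mem_pPolysLT hQ, eval_smul_of_mem_pPolysLT hQ, zmod_smul_C]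

end ProdIdentity

section FiniteSubspaces

variable {K V : Type*} [Field K] [Fintype K] [AddCommGroup V] [Module K V]

theorem Finset.card_eq_pow_finrank_of_coe_eq {W : Submodule K V} {S : Finset V}
    (hS : (S : Set V) = W) : S.card = Fintype.card K ^ Module.finrank K W := by
  have : Finite W := (hS ▸ S.finite_toSet : (W : Set V).Finite).to_subtype
  rw [← Nat.card_eq_finsetCard, ← Nat.card_eq_fintype_card, ← Module.natCard_eq_pow_finrank]
  exact Nat.card_congr (Equiv.setCongr hS)

theorem Finset.prod_eq_prod_prod_of_coe_eq_span_insert [DecidableEq V] {M : Type*}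
    [CommMonoid M] {s : Set V} {a : V} (ha : a ∉ Submodule.span K s) {S S' : Finset V}
    (hS' : (S' : Set V) = Submodule.span K s) (hS : (S : Set V) = Submodule.span K (insert a s))
    (φ : V → M) : ∏ v ∈ S, φ v = ∏ j : K, ∏ w ∈ S', φ (w + j • a) := by
  have hinj : Set.InjOn (fun x : V × K => x.1 + x.2 • a)
      ((S' ×ˢ Finset.univ : Finset (V × K)) : Set (V × K)) := by
    rintro ⟨w, j⟩ hw ⟨w', j'⟩ hw' h
    simp only [Finset.coe_product, Set.mem_prod, Finset.mem_coe, hS'] at hw hw' h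
    have hj : j = j' := by
      by_contra hne
      have hdiff : (j - j') • a = w' - w :=
        (sub_smul j j' a).trans (sub_eq_sub_iff_add_eq_add.mpr (by rw [add_comm (j • a), h]))
      have hmem : (j - j') • a ∈ Submodule.span K s := hdiff ▸ sub_mem hw'.1 hw.1
      exact ha ((Submodule.smul_mem_iff _ (sub_ne_zero.mpr hne)).mp hmem)
    subst hj
    simp_all
  have himage : S = (S' ×ˢ Finset.univ).image fun x : V × K => x.1 + x.2 • a := by
    apply Finset.coe_injective
    ext v
    simp only [hS, SetLike.mem_coe, Submodule.mem_span_insert, Finset.coe_image,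
      Finset.coe_product, Set.mem_image, Set.mem_prod, hS', Finset.coe_univ,
      Set.mem_univ, and_true, Prod.exists]
    constructor
    · rintro ⟨j, w, hw, rfl⟩
      exact ⟨w, j, hw, add_comm _ _⟩
    · rintro ⟨w, j, hw, rfl⟩
      exact ⟨j, w, hw, add_comm _ _⟩
  rw [himage, Finset.prod_image hinj, Finset.prod_product_right]

end FiniteSubspaces

theorem exists_prod_X_sub_C_sub_X_pow_pow_mem_pPolysLT {F : Type*} [Field F] {p : ℕ}
    [Fact p.Prime] [CharP F p] [DecidableEq F] (s : Finset F) :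
    ∀ S : Finset F, (S : Set F) = Submodule.span (ZMod p) (s : Set F) →
      ∃ n, ∏ c ∈ S, (X - C c) - X ^ p ^ n ∈ pPolysLT F p n := by
  induction s using Finset.induction_on with
  | empty =>
    intro S hS
    rw [Finset.coe_empty, Submodule.span_empty, Submodule.bot_coe,
      Finset.coe_eq_singleton] at hS
    exact ⟨0, by simp [hS]⟩
  | insert a s _ ih =>
    intro S hS
    classical
    set W := Submodule.span (ZMod p) (s : Set F)
    have hS' : (S.filter (· ∈ W) : Set F) = W := by
      ext x
      rw [Finset.coe_filter, Set.mem_ofPred_eq, ← Finset.mem_coe, hS]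
      exact and_iff_right_of_imp fun hx => Submodule.span_mono (by simp) hx
    obtain ⟨n, hn⟩ := ih _ hS'
    rw [Finset.coe_insert] at hS
    by_cases ha : a ∈ W
    · rw [Submodule.span_insert_eq_span ha, ← hS'] at hS
      exact ⟨n, by rwa [Finset.coe_injective hS]⟩
    set Q := ∏ c ∈ S.filter (· ∈ W), (X - C c)
    have hQa : Q.eval a ≠ 0 := by
      rw [eval_prod, Finset.prod_ne_zero_iff]
      intro c hc
      simp only [eval_sub, eval_X, eval_C, sub_ne_zero]
      rintro rfl
      exact ha (Finset.mem_filter.mp hc).2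
    have hcomp : ∀ j : ZMod p, ∏ w ∈ S.filter (· ∈ W), (X - C (w + j • a))
        = Q.comp (X - C (j • a)) := fun j => by
      rw [prod_comp]
      refine Finset.prod_congr rfl fun w _ => ?_
      rw [sub_comp, X_comp, C_comp, C_add]
      ring
    refine ⟨n + 1, ?_⟩
    rw [Finset.prod_eq_prod_prod_of_coe_eq_span_insert ha hS' hS, Finset.prod_congr rfl
      fun j _ => hcomp j, prod_comp_X_sub_C_smul (mem_pPolysLT_succ_of_sub_X_pow_pow_mem hn) hQa]
    exact pow_sub_C_mul_sub_X_pow_pow_mem_pPolysLT hn _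

theorem Module.End.HasEigenvalue.isRoot_of_aeval_eq_zero {F V : Type*} [Field F]
    [AddCommGroup V] [Module F V] {u : Module.End F V} {μ : F} (hμ : u.HasEigenvalue μ)
    {g : F[X]} (hg : aeval u g = 0) : g.IsRoot μ := by
  obtain ⟨v, hv⟩ := hμ.exists_hasEigenvector
  have h := Module.End.aeval_apply_of_hasEigenvector (p := g) hv
  rw [hg, LinearMap.zero_apply, eq_comm, smul_eq_zero] at h
  exact h.resolve_right hv.2

theorem Module.End.IsSemisimple.aeval_prod_X_sub_C_eq_zero {F V : Type*} [Field F]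
    [IsAlgClosed F] [AddCommGroup V] [Module F V] [FiniteDimensional F V] {u : Module.End F V}
    (hu : u.IsSemisimple) {S : Finset F} (hS : ∀ μ, u.HasEigenvalue μ → μ ∈ S) :
    aeval u (∏ c ∈ S, (X - C c)) = 0 := by
  have hmin0 : minpoly F u ≠ 0 := minpoly.ne_zero (Algebra.IsIntegral.isIntegral u)
  have hnodup : (minpoly F u).roots.Nodup :=
    nodup_roots (PerfectField.separable_iff_squarefree.mpr hu.minpoly_squarefree)
  obtain ⟨q, hq⟩ : minpoly F u ∣ ∏ c ∈ S, (X - C c) := by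
    refine (IsAlgClosed.splits _).dvd_of_roots_le_roots hmin0 ?_
    rw [roots_prod_X_sub_C, Multiset.le_iff_subset hnodup]
    intro μ hμ
    exact hS μ (Module.End.hasEigenvalue_of_isRoot ((mem_roots hmin0).mp hμ))
  rw [hq, map_mul, minpoly.aeval, zero_mul]

theorem card_le_natDegree_of_mem_pPolysLT {F : Type*} [Field F] {p : ℕ} [Fact p.Prime]
    [CharP F p] {g : F[X]} {n : ℕ} (hg : g ∈ pPolysLT F p n) (hg0 : g ≠ 0) {s : Set F}
    (hs : ∀ x ∈ s, g.IsRoot x) {S : Finset F} (hS : (S : Set F) = Submodule.span (ZMod p) s) :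
    S.card ≤ g.natDegree := by
  have hspan : Submodule.span (ZMod p) s ≤ LinearMap.ker (aevalZModLinearMap F hg) :=
    Submodule.span_le.mpr fun x hx => by simpa using hs x hx
  refine card_le_degree_of_subset_roots fun x hx => ?_
  have hxW : x ∈ (S : Set F) := hx
  rw [hS] at hxW
  simpa [mem_roots hg0] using hspan hxW

theorem span_range_pow_pow_eq_map_pPolysLT {F A : Type*} [Field F] {p : ℕ} [Fact p.Prime]
    [CharP F p] [Ring A] [Algebra F A] {x : A} {f : F[X]} {n : ℕ}
    (hf : f - X ^ p ^ n ∈ pPolysLT F p n) (hfx : aeval x f = 0) :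
    Submodule.span F (Set.range fun j : ℕ => x ^ p ^ j)
      = (pPolysLT F p n).map (aeval x).toLinearMap := by
  set M := (pPolysLT F p n).map (aeval x).toLinearMap
  have hsucc : (pPolysLT F p (n + 1)).map (aeval x).toLinearMap ≤ M := by
    refine Submodule.map_span_le _ _ _ |>.mpr ?_
    rintro _ ⟨j, rfl⟩
    rcases (Nat.lt_succ_iff_lt_or_eq.mp j.isLt) with hj | hj
    · exact Submodule.mem_map_of_mem (X_pow_pow_mem_pPolysLT hj)
    · refine ⟨-(f - X ^ p ^ n), neg_mem hf, ?_⟩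
      simp [hj, hfx]
  have hpow : ∀ m, x ^ p ^ m ∈ M := by
    intro m
    induction m with
    | zero => exact hsucc ⟨X, by simpa using X_pow_pow_mem_pPolysLT (p := p) n.succ_pos, by simp⟩
    | succ m ih =>
      obtain ⟨g, hg, hgx⟩ := ih
      refine hsucc ⟨g ^ p, pow_mem_pPolysLT_succ hg, ?_⟩
      simp only [AlgHom.toLinearMap_apply] at hgx
      simp [hgx, pow_succ, pow_mul]
  refine le_antisymm (Submodule.span_le.mpr (Set.range_subset_iff.mpr hpow)) ?_
  refine (Submodule.map_span_le _ _ _).mpr ?_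
  rintro _ ⟨j, rfl⟩
  exact Submodule.subset_span ⟨j, by simp⟩

/-- For a semisimple endomorphism `u` with `p`-order `r`, the polynomial
`f_u(t) = ∏_{λ ∈ Λ(u)} (t − λ)` annihilates `u`, is a `p`-polynomial of degree `p^r`, is
minimal among nonzero `p`-polynomials annihilating `u`, and the span of the `u^(p^j)` has
dimension `r`. -/
theorem semisimple_minimal_pPolynomial
    (p : ℕ) (hp : p.Prime) (F : Type) [Field F] [IsAlgClosed F] [CharP F p]
    (V : Type) [AddCommGroup V] [Module F V] [FiniteDimensional F V]
    (u : Module.End F V) (hu : u.IsSemisimple)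
    (S : Finset F) (hS : (S : Set F) = (pLambda p u : Set F))
    (f : Polynomial F) (hf : f = ∏ c ∈ S, (Polynomial.X - Polynomial.C c)) :
    Polynomial.aeval u f = 0 ∧
      (IsPPoly p f ∧ f.natDegree = p ^ pOrd p u ∧
        ∀ g : Polynomial F, IsPPoly p g → g ≠ 0 → Polynomial.aeval u g = 0 →
          p ^ pOrd p u ≤ g.natDegree) ∧
      Module.finrank F (Submodule.span F (Set.range fun j : ℕ => u ^ p ^ j)) = pOrd p u := by
  classical
  have := Fact.mk hp
  set r := pOrd p u
  have hcard : S.card = p ^ r := by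
    rw [Finset.card_eq_pow_finrank_of_coe_eq hS, ZMod.card]; rfl
  obtain ⟨n, hn⟩ := exists_prod_X_sub_C_sub_X_pow_pow_mem_pPolysLT (p := p) S S
    (by rw [hS, Submodule.span_eq])
  rw [← hf] at hn
  have hdeg : f.natDegree = p ^ r := by
    rw [hf, natDegree_finsetProd_X_sub_C_eq_card, hcard]
  obtain rfl : n = r := Nat.pow_right_injective hp.two_le
    ((natDegree_eq_of_sub_X_pow_pow_mem_pPolysLT hp.one_lt hn).symm.trans hdeg)
  have hfu : aeval u f = 0 := hf ▸ hu.aeval_prod_X_sub_C_eq_zero fun μ hμ => by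
    rw [← Finset.mem_coe, hS]
    exact Submodule.subset_span hμ
  have hmin : ∀ g : F[X], IsPPoly p g → g ≠ 0 → aeval u g = 0 → p ^ r ≤ g.natDegree := by
    intro g hg hg0 hgu
    obtain ⟨m, hm⟩ := isPPoly_iff_exists_mem_pPolysLT.mp hg
    exact hcard ▸ card_le_natDegree_of_mem_pPolysLT hm hg0
      (fun μ hμ => Module.End.HasEigenvalue.isRoot_of_aeval_eq_zero hμ hgu) hS
  refine ⟨hfu, ⟨isPPoly_iff_exists_mem_pPolysLT.mpr ⟨r + 1,
    mem_pPolysLT_succ_of_sub_X_pow_pow_mem hn⟩, hdeg, hmin⟩, ?_⟩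
  rw [span_range_pow_pow_eq_map_pPolysLT hn hfu]
  refine finrank_map_pPolysLT_of_disjoint hp.one_lt (Submodule.disjoint_def.mpr fun g hg hgu => ?_)
  by_contra hg0
  exact (natDegree_lt_of_mem_pPolysLT hp.one_lt hg hg0).not_ge
    (hmin g (isPPoly_iff_exists_mem_pPolysLT.mpr ⟨r, hg⟩) hg0 hgu)
end

section
/- Let p > 3 be a prime, F an algebraically closed field of characteristic p, n ≥ 1 an integer, and s = p^n − 2. Let L be a Lie algebra over F admitting an F-basis (e_i) indexed by the integers i with −1 ≤ i ≤ s, whose bracket satisfies ⁅e_i, e_j⁆ = (C(i+j+1, j) − C(i+j+1, i)) · e_{i+j} whenever −1 ≤ i+j ≤ s, and ⁅e_i, e_j⁆ = 0 otherwise, where C(a,b) denotes the binomial coefficient reduced modulo p into F (with the convention C(a,b) = 0 if b < 0 or b > a). Then L is generated by one and a half elements: for every nonzero x ∈ L there exists y ∈ L such that the smallest Lie subalgebra of L containing x and y is L itself. -/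
/-!
Write `f m = e_{m-1}` for `0 ≤ m ≤ N`, where `N = p^n - 1 = -1` in `F`. For `t ≠ 0` put
`y = f 0 + t f N`. For each of the `N` distinct roots `ρ` of `ρ^N = t`, the vector
`u ρ = ∑_{m<N} ρ^m f m + 2t f N` is an eigenvector of `ad y` with eigenvalue `ρ`. As `N = -1` in
`F`, the power sums `∑_ρ ρ^r` (`r < 2N`) vanish except at `r = 0, N`; this recovers every `f m`
from `y` and the `u ρ`, and expands `x = ∑ d_m f_m` as `t x - c y = ∑_ρ Ψ(ρ) u ρ` for a nonzero
polynomial `Ψ` depending only on `x`. If `t` is chosen so that no root of `Ψ` is an `N`-th root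
of `t`, all coordinates `Ψ(ρ)` are nonzero, so the `ad y`-invariant span of `x` and `y` contains
every `u ρ`, hence all of `L`.
-/

noncomputable def binomF (F : Type) [Field F] (a b : ℤ) : F :=
  if 0 ≤ b ∧ b ≤ a then ((a.toNat.choose b.toNat : ℕ) : F) else 0

open Finset Polynomial

theorem binomF_self (F : Type) [Field F] {a : ℤ} (ha : 0 ≤ a) : binomF F a a = 1 := by
  simp [binomF, ha]

theorem binomF_of_neg (F : Type) [Field F] (a : ℤ) {b : ℤ} (hb : b < 0) : binomF F a b = 0 :=
  if_neg (by omega)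

theorem binomF_zero (F : Type) [Field F] {a : ℤ} (ha : 0 ≤ a) : binomF F a 0 = 1 := by
  simp [binomF, ha]

theorem binomF_add_one_self (F : Type) [Field F] {a : ℤ} (ha : 0 ≤ a) :
    binomF F (a + 1) a = a + 1 := by
  rw [binomF, if_pos ⟨ha, by omega⟩, show (a + 1).toNat = a.toNat + 1 by omega,
    Nat.choose_succ_self_right]
  push_cast
  rw [← Int.cast_natCast, Int.toNat_of_nonneg ha]

theorem IsPrimitiveRoot.sum_pow_pow {F : Type*} [Field F] {N : ℕ} {ζ : F}
    (hζ : IsPrimitiveRoot ζ N) (r : ℕ) :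
    ∑ k ∈ range N, (ζ ^ r) ^ k = if N ∣ r then (N : F) else 0 := by
  split_ifs with h
  · simp [(hζ.pow_eq_one_iff_dvd r).2 h]
  · have hr : ζ ^ r ≠ 1 := mt (hζ.pow_eq_one_iff_dvd r).1 h
    rw [geom_sum_eq hr, ← pow_mul, mul_comm, pow_mul, hζ.pow_eq_one, one_pow, sub_self, zero_div]

theorem exists_nthRoots_sum_pow {F : Type*} [Field F] [IsAlgClosed F] {N : ℕ}
    (hNF : (N : F) = -1) {t : F} (ht : t ≠ 0) :
    ∃ ρ : ℕ → F, (∀ k, ρ k ^ N = t) ∧ Set.InjOn ρ (range N) ∧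
      ∀ r < 2 * N, ∑ k ∈ range N, ρ k ^ r = if r = 0 then -1 else if r = N then -t else 0 := by
  have hN0 : N ≠ 0 := by rintro rfl; simp at hNF
  obtain ⟨c, hc⟩ := IsAlgClosed.exists_pow_nat_eq t (Nat.pos_of_ne_zero hN0)
  have hc0 : c ≠ 0 := by rintro rfl; exact ht (by rw [← hc, zero_pow hN0])
  have : NeZero (N : F) := ⟨by rw [hNF]; exact neg_ne_zero.2 one_ne_zero⟩
  obtain ⟨ζ, hζ⟩ := HasEnoughRootsOfUnity.exists_primitiveRoot F N
  refine ⟨fun k => c * ζ ^ k, fun k => ?_, fun i hi j hj hij => ?_, fun r hr => ?_⟩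
  · rw [mul_pow, ← pow_mul, mul_comm k, pow_mul, hζ.pow_eq_one, one_pow, mul_one, hc]
  · exact hζ.pow_inj (mem_range.1 hi) (mem_range.1 hj) (mul_left_cancel₀ hc0 hij)
  · simp_rw [mul_pow, ← pow_mul, mul_comm _ r, pow_mul, ← mul_sum, hζ.sum_pow_pow]
    rcases Nat.eq_zero_or_pos r with rfl | hr0
    · simp [hNF]
    by_cases hrN : r = N
    · subst hrN; simp [hN0, hc, hNF]
    · have : ¬ N ∣ r := fun ⟨m, hm⟩ => by
        rcases m with _ | _ | m <;> [omega; omega; nlinarith]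
      simp [hr0.ne', hrN, this]

theorem Polynomial.exists_forall_pow_eq_eval_ne_zero {F : Type*} [Field F] [Infinite F]
    {Ψ : F[X]} (hΨ : Ψ ≠ 0) (N : ℕ) : ∃ t ≠ 0, ∀ ρ : F, ρ ^ N = t → Ψ.eval ρ ≠ 0 := by
  classical
  obtain ⟨t, ht⟩ := Infinite.exists_notMem_finset (insert 0 (Ψ.roots.map (· ^ N)).toFinset)
  refine ⟨t, fun h => ht (by simp [h]), fun ρ hρ hΨρ => ht ?_⟩
  exact mem_insert_of_mem (Multiset.mem_toFinset.2
    (Multiset.mem_map.2 ⟨ρ, (mem_roots hΨ).2 hΨρ, hρ⟩))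

section Eigenvectors

variable {K V : Type*} [Field K] [AddCommGroup V] [Module K V] {p : Submodule K V}
  {T : Module.End K V}

theorem Submodule.aeval_apply_mem (hp : ∀ v ∈ p, T v ∈ p) (P : K[X]) {v : V} (hv : v ∈ p) :
    aeval T P v ∈ p := by
  induction P using Polynomial.induction_on generalizing v with
  | C a => simpa [Module.algebraMap_end_apply] using p.smul_mem a hv
  | add P Q hP hQ => simpa using p.add_mem (hP hv) (hQ hv)
  | monomial n a h =>
    rw [pow_succ, ← mul_assoc, map_mul, aeval_X, Module.End.mul_apply]
    exact h (hp v hv)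

/-- Applying `∏_{j ≠ i} (T - μ j)` isolates the `i`-th summand. -/
theorem Submodule.mem_of_sum_mem_of_apply_eq_smul (hp : ∀ v ∈ p, T v ∈ p) {ι : Type*}
    {s : Finset ι} {μ : ι → K} (hμ : Set.InjOn μ s) {v : ι → V}
    (hv : ∀ i ∈ s, T (v i) = μ i • v i) (hsum : ∑ i ∈ s, v i ∈ p) {i : ι} (hi : i ∈ s) :
    v i ∈ p := by
  classical
  set P := ∏ j ∈ s.erase i, (X - C (μ j))
  have hPi : P.eval (μ i) ≠ 0 := by
    simp only [P, eval_prod, eval_sub, eval_X, eval_C]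
    exact prod_ne_zero_iff.2 fun j hj => sub_ne_zero.2 fun h =>
      (ne_of_mem_erase hj) (hμ (mem_of_mem_erase hj) hi h.symm)
  have hP : ∀ j ∈ s, aeval T P (v j) = if j = i then P.eval (μ i) • v i else 0 := by
    intro j hj
    rw [Module.End.aeval_apply_of_mem_apply_eq_smul (hv j hj)]
    split_ifs with hji
    · rw [hji]
    · rw [eval_prod, prod_eq_zero (mem_erase.2 ⟨hji, hj⟩) (by simp), zero_smul]
  have hmem := p.aeval_apply_mem hp P hsum
  rw [map_sum, sum_congr rfl hP, sum_ite_eq', if_pos hi] at hmem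
  exact (p.smul_mem_iff hPi).1 hmem

end Eigenvectors

section ZassenhausEigenvector

variable {F V : Type*} [Field F] [AddCommGroup V] [Module F V] (f : ℕ → V) (N : ℕ)

noncomputable def zassenhausEigenvector (t ρ : F) : V :=
  ∑ m ∈ range N, ρ ^ m • f m + (2 * t) • f N

variable {f N}

theorem sum_smul_zassenhausEigenvector {ι : Type*} (s : Finset ι) (w ρ : ι → F) (t : F) :
    ∑ k ∈ s, w k • zassenhausEigenvector f N t (ρ k) =
      ∑ m ∈ range N, (∑ k ∈ s, w k * ρ k ^ m) • f m + (2 * t * ∑ k ∈ s, w k) • f N := by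
  simp only [zassenhausEigenvector, smul_add, sum_add_distrib, smul_sum, smul_smul]
  rw [sum_comm, mul_sum, sum_smul]
  simp only [sum_smul, mul_comm (2 * t)]

noncomputable def zassenhausPoly (d : ℕ → F) (N : ℕ) : F[X] :=
  C (d 0) * X ^ N - ∑ m ∈ Ioc 0 N, C (d m) * X ^ (N - m)

theorem zassenhausPoly_coeff_sub {d : ℕ → F} {m : ℕ} (hm : m ≤ N) :
    (zassenhausPoly d N).coeff (N - m) = if m = 0 then d 0 else -d m := by
  have hsum : ∑ m' ∈ Ioc 0 N, (if N - m = N - m' then d m' else 0) =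
      if m ∈ Ioc 0 N then d m else 0 := by
    rw [← sum_ite_eq' (Ioc 0 N) m d]
    exact sum_congr rfl fun m' hm' => by
      simp only [mem_Ioc] at hm'
      exact if_congr (by omega) rfl rfl
  simp only [zassenhausPoly, coeff_sub, coeff_C_mul_X_pow, finsetSum_coeff, hsum, mem_Ioc]
  rcases Nat.eq_zero_or_pos m with rfl | hm0
  · simp
  · rw [if_neg (by omega), if_pos ⟨hm0, hm⟩, if_neg hm0.ne', zero_sub]

theorem zassenhausPoly_ne_zero {d : ℕ → F} (hd : ∃ m ≤ N, d m ≠ 0) : zassenhausPoly d N ≠ 0 := by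
  obtain ⟨m, hmN, hdm⟩ := hd
  intro h
  have := zassenhausPoly_coeff_sub (d := d) hmN
  rw [h, coeff_zero] at this
  split_ifs at this with hm0
  · exact hdm (hm0 ▸ this.symm)
  · exact hdm (neg_eq_zero.1 this.symm)

variable {t : F} {ρ : ℕ → F}
  (hS : ∀ r < 2 * N, ∑ k ∈ range N, ρ k ^ r = if r = 0 then -1 else if r = N then -t else 0)
include hS

theorem sum_pow_smul_zassenhausEigenvector {m : ℕ} (hm : 0 < m) (hmN : m ≤ N) :
    ∑ k ∈ range N, ρ k ^ (N - m) • zassenhausEigenvector f N t (ρ k) =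
      if m = N then -(f 0 + (2 * t) • f N) else -t • f m := by
  have hN : 0 < N := hm.trans_le hmN
  rw [sum_smul_zassenhausEigenvector]
  simp only [← pow_add]
  rcases hmN.lt_or_eq with hlt | rfl
  · rw [if_neg hlt.ne, hS _ (by omega), if_neg (by omega), if_neg (by omega), mul_zero, zero_smul,
      add_zero, sum_eq_single_of_mem m (mem_range.2 hlt)]
    · rw [hS _ (by omega), if_neg (by omega), if_pos (by omega)]
    · intro m' hm' hne
      rw [mem_range] at hm'
      rw [hS _ (by omega), if_neg (by omega), if_neg (by omega), zero_smul]
  · simp only [Nat.sub_self, zero_add, if_true]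
    rw [hS 0 (by omega), if_pos rfl, sum_eq_single_of_mem 0 (mem_range.2 hN)]
    · rw [hS 0 (by omega), if_pos rfl]
      module
    · intro m' hm' hne
      rw [mem_range] at hm'
      rw [hS _ (by omega), if_neg hne, if_neg (by omega), zero_smul]

theorem smul_sum_sub_eq_sum_eval_smul_zassenhausEigenvector (hρ : ∀ k, ρ k ^ N = t) (hN : 0 < N)
    (d : ℕ → F) :
    t • ∑ m ∈ range (N + 1), d m • f m - (2 * t * d 0 - d N) • (f 0 + t • f N) =
      ∑ k ∈ range N, (zassenhausPoly d N).eval (ρ k) • zassenhausEigenvector f N t (ρ k) := by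
  have htop : ∑ k ∈ range N, ρ k ^ N • zassenhausEigenvector f N t (ρ k) =
      -t • (f 0 + (2 * t) • f N) := by
    have := sum_pow_smul_zassenhausEigenvector (f := f) hS hN le_rfl
    simp only [Nat.sub_self, pow_zero, one_smul, if_true] at this
    simp only [hρ, ← smul_sum, this, smul_neg, neg_smul]
  -- the uniform part `-t • f m` cancels against `t • x`
  have hmid : ∀ m ∈ Ioc 0 N, ∑ k ∈ range N, ρ k ^ (N - m) • zassenhausEigenvector f N t (ρ k) =
      -t • f m + if m = N then t • f N - (f 0 + (2 * t) • f N) else 0 := by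
    intro m hm
    rw [mem_Ioc] at hm
    rw [sum_pow_smul_zassenhausEigenvector hS hm.1 hm.2]
    split_ifs with h
    · subst h; module
    · rw [add_zero]
  have hrange : range (N + 1) = insert 0 (Ioc 0 N) := by
    ext m
    simp only [mem_range, mem_insert, mem_Ioc]
    omega
  have hcomm : ∑ m ∈ Ioc 0 N, d m • -t • f m = -t • ∑ m ∈ Ioc 0 N, d m • f m := by
    rw [smul_sum]
    exact sum_congr rfl fun _ _ => smul_comm _ _ _
  simp only [zassenhausPoly, eval_sub, eval_mul, eval_C, eval_pow, eval_X, eval_finsetSum, sub_smul,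
    sum_smul, sum_sub_distrib, mul_smul]
  rw [sum_comm]
  simp only [← smul_sum, htop]
  rw [sum_congr rfl fun m hm => congrArg (d m • ·) (hmid m hm), hrange, sum_insert (by simp)]
  simp only [smul_add, sum_add_distrib, hcomm, smul_ite, smul_zero, sum_ite_eq', mem_Ioc, hN,
    le_rfl, and_self, if_true]
  module

theorem mem_of_forall_zassenhausEigenvector_mem {P : Submodule F V} (ht : t ≠ 0) (hN : 0 < N)
    (hy : f 0 + t • f N ∈ P) (hu : ∀ k < N, zassenhausEigenvector f N t (ρ k) ∈ P) {m : ℕ}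
    (hm : m ≤ N) : f m ∈ P := by
  have hsum : ∀ m, 0 < m → m ≤ N → (if m = N then -(f 0 + (2 * t) • f N) else -t • f m) ∈ P :=
    fun m h0 hmN => sum_pow_smul_zassenhausEigenvector (f := f) hS h0 hmN ▸
      P.sum_mem fun k hk => P.smul_mem _ (hu k (mem_range.1 hk))
  have hfN : f N ∈ P := by
    have hz := hsum N hN le_rfl
    rw [if_pos rfl] at hz
    have : t • f N ∈ P := by
      convert P.sub_mem (P.neg_mem hz) hy using 1
      module
    exact (P.smul_mem_iff ht).1 this
  rcases Nat.eq_zero_or_pos m with rfl | hm0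
  · convert P.sub_mem hy (P.smul_mem t hfN) using 1
    module
  rcases hm.lt_or_eq with hlt | rfl
  · have := hsum m hm0 hm
    rw [if_neg hlt.ne] at this
    exact (P.smul_mem_iff (neg_ne_zero.2 ht)).1 this
  · exact hfN

end ZassenhausEigenvector

/-- The brackets of `e_{-1} = f 0` and `e_s = f N` in the basis `f m = e_{m-1}` of `W(1,n)`. -/
structure IsZassenhausFamily {L : Type*} [LieRing L] (f : ℕ → L) (N : ℕ) : Prop where
  lie_zero_succ : ∀ m < N, ⁅f 0, f (m + 1)⁆ = f m
  lie_last_zero : ⁅f N, f 0⁆ = -f (N - 1)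
  lie_last_one : ⁅f N, f 1⁆ = 2 • f N
  lie_last_of_two_le : ∀ m, 2 ≤ m → m ≤ N → ⁅f N, f m⁆ = 0

namespace IsZassenhausFamily

variable {F L : Type*} [Field F] [LieRing L] [LieAlgebra F L] {f : ℕ → L} {N : ℕ}

theorem lie_eigenvector (h : IsZassenhausFamily f N) (hN : 2 ≤ N) {t ρ : F} (hρ : ρ ^ N = t) :
    ⁅f 0 + t • f N, zassenhausEigenvector f N t ρ⁆ = ρ • zassenhausEigenvector f N t ρ := by
  obtain ⟨M, rfl⟩ : ∃ M, N = M + 2 := ⟨N - 2, by omega⟩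
  have hlow : ⁅f 0, ∑ m ∈ range (M + 2), ρ ^ m • f m⁆ =
      ∑ m ∈ range (M + 1), ρ ^ (m + 1) • f m := by
    rw [lie_sum, sum_range_succ', lie_smul, lie_self, smul_zero, add_zero]
    exact sum_congr rfl fun m hm => by
      rw [lie_smul, h.lie_zero_succ m (by rw [mem_range] at hm; omega)]
  have hhigh : ⁅f (M + 2), ∑ m ∈ range (M + 2), ρ ^ m • f m⁆ =
      -f (M + 1) + (2 * ρ) • f (M + 2) := by
    rw [lie_sum, sum_range_succ', sum_range_succ', sum_eq_zero fun m hm => by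
      rw [mem_range] at hm
      rw [lie_smul, h.lie_last_of_two_le (m + 2) (by omega) (by omega), smul_zero]]
    rw [lie_smul, lie_smul, h.lie_last_zero, h.lie_last_one, show M + 2 - 1 = M + 1 by omega]
    module
  simp only [zassenhausEigenvector, add_lie, lie_add, smul_lie, lie_smul, lie_self, smul_zero,
    add_zero, hlow, hhigh, h.lie_zero_succ (M + 1) (by omega)]
  conv_rhs => rw [smul_add, smul_sum, sum_range_succ _ (M + 1)]
  simp only [smul_smul, ← pow_succ', hρ]
  module

theorem exists_lieSpan_eq_top [IsAlgClosed F] (h : IsZassenhausFamily f N) (hN : 2 ≤ N)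
    (hNF : (N : F) = -1) (hspan : Submodule.span F (f '' ↑(range (N + 1))) = ⊤) {x : L}
    (hx : x ≠ 0) : ∃ y, LieSubalgebra.lieSpan F L {x, y} = ⊤ := by
  have hx' : x ∈ Submodule.span F (f '' ↑(range (N + 1))) := hspan ▸ Submodule.mem_top
  obtain ⟨d, rfl⟩ := (Submodule.mem_span_image_finset_iff_exists_fun' F).1 hx'
  have hd : ∃ m ≤ N, d m ≠ 0 := by
    by_contra! hd
    exact hx (sum_eq_zero fun m hm => by rw [hd m (Nat.lt_succ_iff.1 (mem_range.1 hm)), zero_smul])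
  obtain ⟨t, ht, hΨ⟩ := exists_forall_pow_eq_eval_ne_zero (zassenhausPoly_ne_zero hd) N
  obtain ⟨ρ, hρN, hρ, hS⟩ := exists_nthRoots_sum_pow hNF ht
  set y := f 0 + t • f N
  refine ⟨y, ?_⟩
  set M := (LieSubalgebra.lieSpan F L {∑ m ∈ range (N + 1), d m • f m, y}).toSubmodule
  have hxM : ∑ m ∈ range (N + 1), d m • f m ∈ M :=
    LieSubalgebra.subset_lieSpan (Set.mem_insert _ _)
  have hyM : y ∈ M := LieSubalgebra.subset_lieSpan (Set.mem_insert_of_mem _ rfl)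
  have hu : ∀ k < N, zassenhausEigenvector f N t (ρ k) ∈ M := by
    intro k hk
    have hsum := smul_sum_sub_eq_sum_eval_smul_zassenhausEigenvector (f := f) hS hρN (by omega) d ▸
      M.sub_mem (M.smul_mem t hxM) (M.smul_mem _ hyM)
    refine (M.smul_mem_iff (hΨ _ (hρN k))).1 (M.mem_of_sum_mem_of_apply_eq_smul
      (T := LieAlgebra.ad F L y) (fun v hv => LieSubalgebra.lie_mem _ hyM hv) hρ
      (fun k _ => ?_) hsum (mem_range.2 hk))
    rw [LieAlgebra.ad_apply, lie_smul, h.lie_eigenvector hN (hρN k), smul_comm]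
  rw [eq_top_iff, ← LieSubalgebra.toSubmodule_le_toSubmodule, LieSubalgebra.top_toSubmodule,
    ← hspan, Submodule.span_le]
  rintro _ ⟨m, hm, rfl⟩
  exact mem_of_forall_zassenhausEigenvector_mem hS ht (by omega) hyM hu
    (Nat.lt_succ_iff.1 (mem_range.1 hm))

end IsZassenhausFamily

theorem isZassenhausFamily_of_brackets {F L : Type} [Field F] [LieRing L] [LieAlgebra F L]
    {N : ℕ} (hN : 1 ≤ N) (hNF : (N : F) = -1) {s : ℤ} (hs : s = N - 1) (e : ℤ → L)
    (hbrack : ∀ i j : ℤ, i ∈ Set.Icc (-1 : ℤ) s → j ∈ Set.Icc (-1 : ℤ) s →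
      ⁅e i, e j⁆ =
        if i + j ∈ Set.Icc (-1 : ℤ) s then
          (binomF F (i + j + 1) j - binomF F (i + j + 1) i) • e (i + j)
        else 0) :
    IsZassenhausFamily (fun m : ℕ => e (m - 1)) N := by
  simp only [Set.mem_Icc] at hbrack
  refine ⟨fun m hm => ?_, ?_, ?_, fun m hm hmN => ?_⟩
  · simp only [Nat.cast_zero, zero_sub, Nat.cast_succ, add_sub_cancel_right]
    rw [hbrack (-1) m (by omega) (by omega), if_pos (by omega),
      show (-1 : ℤ) + m + 1 = m by ring, binomF_self F (by omega), binomF_of_neg F _ (by omega),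
      sub_zero, one_smul, neg_add_eq_sub]
  · simp only [Nat.cast_zero, zero_sub, ← hs]
    rw [hbrack s (-1) (by omega) (by omega), if_pos (by omega),
      show s + -1 + 1 = s by ring, binomF_self F (by omega), binomF_of_neg F _ (by omega),
      zero_sub, neg_one_smul, Nat.cast_sub hN, Nat.cast_one, hs, ← sub_eq_add_neg]
  · simp only [Nat.cast_one, sub_self, ← hs]
    rw [hbrack s 0 (by omega) (by omega), if_pos (by omega), add_zero,
      binomF_zero F (by omega), binomF_add_one_self F (by omega), hs]
    push_cast
    rw [hNF, show (1 : F) - (-1 - 1 + 1) = 2 by ring, two_smul, two_nsmul]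
  · simp only [← hs]
    rw [hbrack s (m - 1) (by omega) (by omega), if_neg (by omega)]

theorem image_natCast_sub_one_range {L : Type*} (e : ℤ → L) (N : ℕ) :
    (fun m : ℕ => e (m - 1)) '' ↑(range (N + 1)) = e '' Set.Icc (-1) (N - 1) := by
  rw [show (fun m : ℕ => e (m - 1)) = e ∘ fun m : ℕ => (m : ℤ) - 1 from rfl, Set.image_comp]
  congr 1
  ext i
  simp only [coe_range, Set.mem_image, Set.mem_Iio, Set.mem_Icc]
  constructor
  · rintro ⟨m, hm, rfl⟩
    omega
  · intro hi
    exact ⟨(i + 1).toNat, by omega, by omega⟩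

theorem zassenhaus_generated_by_one_and_a_half_general
    (p : ℕ) (hp3 : 3 < p)
    (F : Type) [Field F] [IsAlgClosed F] [CharP F p]
    (n : ℕ) (hn : 1 ≤ n) (s : ℤ) (hs : s = (p : ℤ) ^ n - 2)
    (L : Type) [LieRing L] [LieAlgebra F L] (e : ℤ → L)
    (hspan : Submodule.span F (e '' Set.Icc (-1 : ℤ) s) = ⊤)
    (hbrack : ∀ i j : ℤ, i ∈ Set.Icc (-1 : ℤ) s → j ∈ Set.Icc (-1 : ℤ) s →
      ⁅e i, e j⁆ =
        if i + j ∈ Set.Icc (-1 : ℤ) s then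
          (binomF F (i + j + 1) j - binomF F (i + j + 1) i) • e (i + j)
        else 0) :
    ∀ x : L, x ≠ 0 → ∃ y : L, LieSubalgebra.lieSpan F L {x, y} = ⊤ := by
  obtain ⟨N, hNq⟩ : ∃ N, N + 1 = p ^ n :=
    ⟨p ^ n - 1, Nat.sub_add_cancel (Nat.one_le_pow _ _ (by omega))⟩
  have hN : 2 ≤ N := by have := Nat.le_self_pow (by omega : n ≠ 0) p; omega
  have hNF : (N : F) = -1 := by
    have : ((N + 1 : ℕ) : F) = 0 := by
      rw [hNq, Nat.cast_pow, CharP.cast_eq_zero, zero_pow (by omega)]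
    push_cast at this
    linear_combination this
  have hsN : s = N - 1 := by
    rw [hs, ← Nat.cast_pow, ← hNq]
    push_cast
    ring
  intro x hx
  refine (isZassenhausFamily_of_brackets (by omega) hNF hsN e hbrack).exists_lieSpan_eq_top
    hN hNF ?_ hx
  rw [image_natCast_sub_one_range, ← hsN, hspan]

/-- The Zassenhaus algebra `W(1,n)`, presented by a basis `e_{-1}, …, e_s`
(`s = p^n − 2`) with brackets `⁅e_i, e_j⁆ = (C(i+j+1,j) − C(i+j+1,i)) e_{i+j}`, is generated
by one and a half elements. -/
theorem zassenhaus_generated_by_one_and_a_half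
    (p : ℕ) (hp : p.Prime) (hp3 : 3 < p)
    (F : Type) [Field F] [IsAlgClosed F] [CharP F p]
    (n : ℕ) (hn : 1 ≤ n) (s : ℤ) (hs : s = (p : ℤ) ^ n - 2)
    (L : Type) [LieRing L] [LieAlgebra F L] (e : ℤ → L)
    (hli : LinearIndependent F fun i : Set.Icc (-1 : ℤ) s => e i)
    (hspan : Submodule.span F (e '' Set.Icc (-1 : ℤ) s) = ⊤)
    (hbrack : ∀ i j : ℤ, i ∈ Set.Icc (-1 : ℤ) s → j ∈ Set.Icc (-1 : ℤ) s →
      ⁅e i, e j⁆ =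
        if i + j ∈ Set.Icc (-1 : ℤ) s then
          (binomF F (i + j + 1) j - binomF F (i + j + 1) i) • e (i + j)
        else 0) :
    ∀ x : L, x ≠ 0 → ∃ y : L, LieSubalgebra.lieSpan F L {x, y} = ⊤ :=
  zassenhaus_generated_by_one_and_a_half_general p hp3 F n hn s hs L e hspan hbrack
end
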